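/- arXiv:1605.03934 — 10 statements merged into one kernel-verified Lean document; each statement's English description precedes it below -/
import Mathlib

section
/- Let R be a commutative ring and s ∈ R. An R-module C satisfies Ext¹_R(R[s⁻¹], C) = 0 if and only if for every sequence of elements a₀, a₁, a₂, … ∈ C the infinite system of equations bₙ − s·bₙ₊₁ = aₙ (n ≥ 0) has a solution b₀, b₁, b₂, … ∈ C. -/
/-!
Since `R[s⁻¹] ≅ R[X]/(sX - 1)` and `1 - sX` is a non-zero-divisor (its constant coefficient
is a unit), `0 → R[X] --(· * (1 - sX))--> R[X] → R[s⁻¹] → 0` is a free resolution of `R[s⁻¹]`.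
Hence `Ext¹(R[s⁻¹], C)` vanishes iff precomposition with `· * (1 - sX)` is surjective on
`Hom_R(R[X], C)`. Identifying `Hom_R(R[X], C)` with `C^ℕ` through the monomial basis, this
precomposition becomes `(bₙ) ↦ (bₙ - s • bₙ₊₁)`.
-/

open CategoryTheory Opposite Limits ZeroObject
open scoped nonZeroDivisors

namespace CategoryTheory.ShortComplex

variable {C : Type*} [Category C] [Abelian C] (S : ShortComplex C)

noncomputable def lengthOneComplexX : ℕ → C
  | 0 => S.X₂
  | 1 => S.X₁
  | _ + 2 => 0

noncomputable def lengthOneComplexD : ∀ n, S.lengthOneComplexX (n + 1) ⟶ S.lengthOneComplexX n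
  | 0 => S.f
  | _ + 1 => 0

noncomputable def lengthOneComplex : ChainComplex C ℕ :=
  ChainComplex.of S.lengthOneComplexX S.lengthOneComplexD fun _ => zero_comp

/- The objects of `lengthOneComplex` are those of `S` only up to unfolding; these identity
isomorphisms let the morphisms of `S` be used with the types of the complex. -/
noncomputable def lengthOneComplexXZeroIso : S.lengthOneComplex.X 0 ≅ S.X₂ := Iso.refl _

noncomputable def lengthOneComplexXOneIso : S.lengthOneComplex.X 1 ≅ S.X₁ := Iso.refl _

lemma lengthOneComplex_d_one_zero : S.lengthOneComplex.d 1 0 =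
    S.lengthOneComplexXOneIso.hom ≫ S.f ≫ S.lengthOneComplexXZeroIso.inv :=
  (ChainComplex.of_d S.lengthOneComplexX S.lengthOneComplexD 0).trans
    ((Category.id_comp _).trans (Category.comp_id _)).symm

lemma lengthOneComplex_d_two_one : S.lengthOneComplex.d 2 1 = 0 :=
  ChainComplex.of_d S.lengthOneComplexX S.lengthOneComplexD 1

lemma isZero_lengthOneComplex_X (n : ℕ) : IsZero (S.lengthOneComplex.X (n + 2)) :=
  isZero_zero C

variable {S}

lemma ShortExact.lengthOneComplex_exactAt_succ (hS : S.ShortExact) (n : ℕ) :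
    S.lengthOneComplex.ExactAt (n + 1) := by
  rw [HomologicalComplex.exactAt_iff' _ (n + 2) (n + 1) n (by simp) (by simp)]
  cases n with
  | zero =>
    rw [ShortComplex.exact_iff_mono _ S.lengthOneComplex_d_two_one]
    have := hS.mono_f
    change Mono (S.lengthOneComplex.d 1 0)
    rw [lengthOneComplex_d_one_zero]
    infer_instance
  | succ n => exact ShortComplex.exact_of_isZero_X₂ _ (S.isZero_lengthOneComplex_X n)

noncomputable def ShortExact.projectiveResolution (hS : S.ShortExact) [Projective S.X₁]
    [Projective S.X₂] : ProjectiveResolution S.X₃ where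
  complex := S.lengthOneComplex
  projective
    | 0 => inferInstanceAs (Projective S.X₂)
    | 1 => inferInstanceAs (Projective S.X₁)
    | n + 2 => (S.isZero_lengthOneComplex_X n).projective
  π := (ChainComplex.toSingle₀Equiv _ _).symm
    ⟨S.lengthOneComplexXZeroIso.hom ≫ S.g, by simp [lengthOneComplex_d_one_zero]⟩
  quasiIso := ⟨fun n => by
    cases n with
    | zero =>
      rw [ChainComplex.quasiIsoAt₀_iff, ShortComplex.quasiIso_iff_of_zeros' _ rfl rfl rfl]
      refine (ShortComplex.exact_and_epi_g_iff_of_iso ?_).2 ⟨hS.exact, hS.epi_g⟩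
      refine ShortComplex.isoMk S.lengthOneComplexXOneIso S.lengthOneComplexXZeroIso
        (HomologicalComplex.singleObjXSelf (ComplexShape.down ℕ) 0 S.X₃) ?_ ?_
      · change _ = S.lengthOneComplex.d 1 0 ≫ _
        simp [lengthOneComplex_d_one_zero]
        rfl
      · simp
        exact (Category.comp_id _).symm
    | succ n =>
      rw [quasiIsoAt_iff_exactAt' _ _ (ChainComplex.exactAt_succ_single_obj _ _)]
      exact hS.lengthOneComplex_exactAt_succ n⟩

lemma ShortExact.projectiveResolution_complex (hS : S.ShortExact) [Projective S.X₁]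
    [Projective S.X₂] : hS.projectiveResolution.complex = S.lengthOneComplex :=
  rfl

end CategoryTheory.ShortComplex

namespace CategoryTheory

variable {R : Type*} [Ring R] {C : Type*} [Category C] [Abelian C] [Linear R C]
  [EnoughProjectives C]

lemma ProjectiveResolution.subsingleton_ext_one_iff {X : C} (P : ProjectiveResolution X)
    (Y : C) :
    Subsingleton (((Ext R C 1).obj (op X)).obj Y) ↔
      ∀ f : P.complex.X 1 ⟶ Y, P.complex.d 2 1 ≫ f = 0 →
        ∃ g : P.complex.X 0 ⟶ Y, P.complex.d 1 0 ≫ g = f := by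
  rw [Equiv.subsingleton_congr (P.isoExt 1 Y).toLinearEquiv.toEquiv,
    ← ModuleCat.isZero_iff_subsingleton, ← HomologicalComplex.exactAt_iff_isZero_homology,
    HomologicalComplex.exactAt_iff' _ 0 1 2 (by simp) (by simp),
    ShortComplex.moduleCat_exact_iff]
  rfl

lemma ShortComplex.ShortExact.subsingleton_ext_one_iff {S : ShortComplex C}
    (hS : S.ShortExact) [Projective S.X₁] [Projective S.X₂] (Y : C) :
    Subsingleton (((Ext R C 1).obj (Opposite.op S.X₃)).obj Y) ↔
      ∀ f : S.X₁ ⟶ Y, ∃ g : S.X₂ ⟶ Y, S.f ≫ g = f := by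
  rw [hS.projectiveResolution.subsingleton_ext_one_iff, hS.projectiveResolution_complex]
  simp only [lengthOneComplex_d_two_one, zero_comp, forall_const, lengthOneComplex_d_one_zero,
    Category.assoc]
  constructor
  · intro h f
    obtain ⟨g, hg⟩ := h (S.lengthOneComplexXOneIso.hom ≫ f)
    exact ⟨S.lengthOneComplexXZeroIso.inv ≫ g, (cancel_epi _).1 hg⟩
  · intro h f
    obtain ⟨g, hg⟩ := h (S.lengthOneComplexXOneIso.inv ≫ f)
    exact ⟨S.lengthOneComplexXZeroIso.hom ≫ g, by simp [hg]⟩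

end CategoryTheory

lemma ModuleCat.forall_exists_ofHom_comp_eq_iff {R : Type*} [Ring R] {M N : Type v}
    [AddCommGroup M] [Module R M] [AddCommGroup N] [Module R N] (d : M →ₗ[R] N)
    (Y : ModuleCat.{v} R) :
    (∀ f : ModuleCat.of R M ⟶ Y, ∃ g : ModuleCat.of R N ⟶ Y, ModuleCat.ofHom d ≫ g = f) ↔
      Function.Surjective fun g : N →ₗ[R] Y => g ∘ₗ d := by
  refine ⟨fun h f => ?_, fun h f => ?_⟩
  · obtain ⟨g, hg⟩ := h (ModuleCat.ofHom f)
    exact ⟨g.hom, congr_arg ModuleCat.Hom.hom hg⟩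
  · obtain ⟨g, hg⟩ := h f.hom
    exact ⟨ModuleCat.ofHom g, ModuleCat.hom_ext hg⟩

namespace Polynomial

variable {R : Type*} [CommRing R]

lemma mem_nonZeroDivisors_of_isUnit_coeff_zero {p : R[X]} (h : IsUnit (p.coeff 0)) :
    p ∈ R[X]⁰ := by
  nontriviality R
  apply mem_nonZeroDivisors_of_trailingCoeff
  rw [trailingCoeff_eq_coeff_zero h.ne_zero]
  exact h.mem_nonZeroDivisors

variable (s : R)

lemma mulRight_one_sub_C_mul_X_injective :
    Function.Injective (LinearMap.mulRight R (1 - C s * X : R[X])) :=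
  (isRegular_iff_mem_nonZeroDivisors.2 (mem_nonZeroDivisors_of_isUnit_coeff_zero (by simp))).right

lemma constr_comp_mulRight_one_sub_C_mul_X {M : Type*} [AddCommGroup M] [Module R M]
    (b : ℕ → M) :
    (basisMonomials R).constr R b ∘ₗ LinearMap.mulRight R (1 - C s * X) =
      (basisMonomials R).constr R fun n => b n - s • b (n + 1) := by
  refine (basisMonomials R).ext fun n => ?_
  have hmul : basisMonomials R n * (1 - C s * X) =
      basisMonomials R n - s • basisMonomials R (n + 1) := by
    simp only [coe_basisMonomials, monomial_one_right_eq_X_pow, smul_eq_C_mul]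
    ring
  rw [LinearMap.comp_apply, LinearMap.mulRight_apply, hmul, map_sub, map_smul,
    Module.Basis.constr_basis, Module.Basis.constr_basis, Module.Basis.constr_basis]

lemma surjective_comp_mulRight_one_sub_C_mul_X_iff {M : Type*} [AddCommGroup M] [Module R M] :
    (Function.Surjective fun g : R[X] →ₗ[R] M => g ∘ₗ LinearMap.mulRight R (1 - C s * X)) ↔
      ∀ a : ℕ → M, ∃ b : ℕ → M, ∀ n, b n - s • b (n + 1) = a n := by
  let e := (basisMonomials R).constr (M' := M) R
  have h : (fun g : R[X] →ₗ[R] M => g ∘ₗ LinearMap.mulRight R (1 - C s * X)) ∘ e =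
      e ∘ fun b n => b n - s • b (n + 1) :=
    _root_.funext (constr_comp_mulRight_one_sub_C_mul_X s)
  rw [← EquivLike.surjective_comp e, h, EquivLike.comp_surjective]
  simp only [Function.Surjective, funext_iff]

end Polynomial

namespace Localization

open Polynomial

variable {R : Type*} [CommRing R] (s : R)

noncomputable abbrev awayShortComplex : ShortComplex (ModuleCat R) where
  X₁ := ModuleCat.of R R[X]
  X₂ := ModuleCat.of R R[X]
  X₃ := ModuleCat.of R (Away s)
  f := ModuleCat.ofHom (LinearMap.mulRight R (1 - C s * X))
  g := ModuleCat.ofHom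
    ((awayEquivAdjoin s).symm.toLinearMap ∘ₗ (AdjoinRoot.mkₐ (C s * X - 1)).toLinearMap)
  zero := by
    ext p
    simp

lemma range_mulRight_one_sub_C_mul_X_eq_ker :
    LinearMap.range (LinearMap.mulRight R (1 - C s * X : R[X])) =
      LinearMap.ker ((awayEquivAdjoin s).symm.toLinearMap ∘ₗ
        (AdjoinRoot.mkₐ (C s * X - 1)).toLinearMap) := by
  ext p
  simp only [LinearMap.mem_range, LinearMap.mulRight_apply, LinearMap.mem_ker,
    LinearMap.comp_apply, AlgEquiv.toLinearMap_apply, AlgHom.toLinearMap_apply, map_eq_zero_iff _ (AlgEquiv.injective _)]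
  rw [AdjoinRoot.coe_mkₐ, AdjoinRoot.mk_eq_zero, ← neg_dvd, neg_sub, dvd_iff_exists_eq_mul_left]
  exact exists_congr fun q => eq_comm

lemma awayShortComplex_shortExact : (awayShortComplex s).ShortExact := by
  refine .mk' ?_ ?_ ?_
  · rw [ShortComplex.moduleCat_exact_iff_range_eq_ker]
    exact range_mulRight_one_sub_C_mul_X_eq_ker s
  · exact (ModuleCat.mono_iff_injective _).2 (mulRight_one_sub_C_mul_X_injective s)
  · exact (ModuleCat.epi_iff_surjective _).2
      ((awayEquivAdjoin s).symm.surjective.comp AdjoinRoot.mk_surjective)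

end Localization

/-- For a commutative ring `R`, an element `s ∈ R`, and an `R`-module `C`,
one has `Ext¹_R(R[s⁻¹], C) = 0` if and only if every infinite system of equations
`bₙ - s·bₙ₊₁ = aₙ` (n ≥ 0) has a solution in `C`. -/
theorem ext1_localizationAway_vanishes_iff_equation_system_solvable
    (R : Type) [CommRing R] (s : R) (C : Type) [AddCommGroup C] [Module R C] :
    Subsingleton (((Ext R (ModuleCat R) 1).obj
        (op (ModuleCat.of R (Localization.Away s)))).obj (ModuleCat.of R C)) ↔
      ∀ a : ℕ → C, ∃ b : ℕ → C, ∀ n : ℕ, b n - s • b (n + 1) = a n :=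
  ((Localization.awayShortComplex_shortExact s).subsingleton_ext_one_iff _).trans
    ((ModuleCat.forall_exists_ofHom_comp_eq_iff _ _).trans
      (Polynomial.surjective_comp_mulRight_one_sub_C_mul_X_iff s))
end

section
/- Let U be a left R-module of projective dimension at most 1. Then the full subcategory of left R-modules C satisfying Hom_R(U,C) = 0 = Ext¹_R(U,C) is closed under kernels, cokernels, extensions, and arbitrary products in the category of left R-modules; in particular it is an abelian category with exact inclusion functor. -/
open CategoryTheory Opposite

/-- The `Ext^{0,1}`-orthogonality class of a left `R`-module `U`: the class of left
`R`-modules `C` with `Hom_R(U,C) = 0 = Ext¹_R(U,C)`. -/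
def IsExt01Orthogonal (R : Type) [Ring R] (U : Type) [AddCommGroup U] [Module R U]
    (C : Type) [AddCommGroup C] [Module R C] : Prop :=
  Subsingleton (U →ₗ[R] C) ∧
    Subsingleton (((Ext ℤ (ModuleCat R) 1).obj
      (op (ModuleCat.of R U))).obj (ModuleCat.of R C))

/-!
Fix a projective resolution `⋯ → P₁ → P₀ → U` and let `K ≤ P₀` be the image of `P₁ → P₀`, so
that `U ≅ P₀ ⧸ K`. As `P₀` is projective, `Hom(U, Y) = 0 = Ext¹(U, Y)` says exactly that every
map `K → Y` extends uniquely to `P₀`, while `pd U ≤ 1` says exactly that `K` is projective.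
Closure under kernels and products is then formal. For extensions `0 → A → E → E ⧸ A → 0` one
extends to `P₀` in `E ⧸ A` and lifts back to `E` by projectivity of `P₀`; for cokernels one
moreover lifts maps out of `K` through `C ↠ im f`, by projectivity of `K`.
-/

open Limits Function

section Factorization

variable {R : Type*} [Ring R] {M N Q Y : Type*} [AddCommGroup M] [Module R M]
  [AddCommGroup N] [Module R N] [AddCommGroup Q] [Module R Q] [AddCommGroup Y] [Module R Y]

theorem Submodule.exists_subtype_comp_eq_of_range_le {A : Submodule R N} {φ : M →ₗ[R] N}
    (h : LinearMap.range φ ≤ A) : ∃ ψ : M →ₗ[R] A, A.subtype ∘ₗ ψ = φ :=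
  ⟨φ.codRestrict A fun x => h (LinearMap.mem_range_self φ x), rfl⟩

theorem Module.Projective.exists_comp_eq_of_range_le [Module.Projective R M] (f : Y →ₗ[R] N)
    {φ : M →ₗ[R] N} (h : LinearMap.range φ ≤ LinearMap.range f) :
    ∃ ψ : M →ₗ[R] Y, f ∘ₗ ψ = φ := by
  obtain ⟨φ', hφ'⟩ := Submodule.exists_subtype_comp_eq_of_range_le h
  obtain ⟨ψ, hψ⟩ :=
    Module.projective_lifting_property f.rangeRestrict φ' f.surjective_rangeRestrict
  exact ⟨ψ, by rw [← hφ', ← hψ]; rfl⟩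

theorem Function.Exact.exists_comp_eq_of_comp_eq_zero {d : M →ₗ[R] N} {e : N →ₗ[R] Q}
    (hde : Function.Exact d e) (he : Surjective e) {h : N →ₗ[R] Y} (hh : h ∘ₗ d = 0) :
    ∃ h' : Q →ₗ[R] Y, h' ∘ₗ e = h :=
  ⟨(LinearMap.range d).liftQ h (LinearMap.range_le_ker_iff.mpr hh) ∘ₗ
    (hde.linearEquivOfSurjective he).symm.toLinearMap, by ext x; simp⟩

end Factorization

namespace Submodule

variable {R : Type*} [Ring R] {P : Type*} [AddCommGroup P] [Module R P]

/-- When `P` is projective, `Hom(P ⧸ K, Y) = 0 = Ext¹(P ⧸ K, Y)` says exactly that every map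
`K → Y` extends uniquely along `K ≤ P`. -/
structure IsQuotOrthogonal (K : Submodule R P) (Y : Type*) [AddCommGroup Y] [Module R Y] :
    Prop where
  eq_zero_of_comp_subtype : ∀ g : P →ₗ[R] Y, g ∘ₗ K.subtype = 0 → g = 0
  exists_comp_subtype_eq : ∀ h : K →ₗ[R] Y, ∃ g : P →ₗ[R] Y, g ∘ₗ K.subtype = h

namespace IsQuotOrthogonal

variable {K : Submodule R P} {C D : Type*} [AddCommGroup C] [Module R C]
  [AddCommGroup D] [Module R D]

theorem eq_of_comp_subtype_eq (hC : K.IsQuotOrthogonal C) {g₁ g₂ : P →ₗ[R] C}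
    (h : g₁ ∘ₗ K.subtype = g₂ ∘ₗ K.subtype) : g₁ = g₂ :=
  sub_eq_zero.mp <| hC.eq_zero_of_comp_subtype _ <| by rw [LinearMap.sub_comp, h, sub_self]

theorem ker (hC : K.IsQuotOrthogonal C) (hD : K.IsQuotOrthogonal D) (f : C →ₗ[R] D) :
    K.IsQuotOrthogonal (LinearMap.ker f) where
  eq_zero_of_comp_subtype g hg := by
    refine (LinearMap.cancel_left (LinearMap.ker f).injective_subtype).mp ?_
    rw [LinearMap.comp_zero]
    exact hC.eq_zero_of_comp_subtype _ (by rw [LinearMap.comp_assoc, hg, LinearMap.comp_zero])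
  exists_comp_subtype_eq h := by
    obtain ⟨g, hg⟩ := hC.exists_comp_subtype_eq ((LinearMap.ker f).subtype ∘ₗ h)
    have hfg : f ∘ₗ g = 0 := hD.eq_zero_of_comp_subtype _ <| by
      rw [LinearMap.comp_assoc, hg, ← LinearMap.comp_assoc, LinearMap.comp_ker_subtype,
        LinearMap.zero_comp]
    obtain ⟨g', hg'⟩ :=
      Submodule.exists_subtype_comp_eq_of_range_le (LinearMap.range_le_ker_iff.mpr hfg)
    refine ⟨g', (LinearMap.cancel_left (LinearMap.ker f).injective_subtype).mp ?_⟩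
    rw [← LinearMap.comp_assoc, hg', hg]

theorem quotient_range [Module.Projective R P] [Module.Projective R K]
    (hC : K.IsQuotOrthogonal C) (hD : K.IsQuotOrthogonal D) (f : C →ₗ[R] D) :
    K.IsQuotOrthogonal (D ⧸ LinearMap.range f) where
  eq_zero_of_comp_subtype g hg := by
    obtain ⟨g', rfl⟩ :=
      Module.projective_lifting_property _ g (LinearMap.range f).mkQ_surjective
    obtain ⟨h, hh⟩ :=
        Module.Projective.exists_comp_eq_of_range_le f (φ := g' ∘ₗ K.subtype) <| by
      rw [← Submodule.ker_mkQ (LinearMap.range f), LinearMap.range_le_ker_iff,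
        ← LinearMap.comp_assoc, hg]
    obtain ⟨h', rfl⟩ := hC.exists_comp_subtype_eq h
    have : g' = f ∘ₗ h' := hD.eq_of_comp_subtype_eq (by rw [← hh, LinearMap.comp_assoc])
    rw [this, ← LinearMap.comp_assoc, LinearMap.range_mkQ_comp, LinearMap.zero_comp]
  exists_comp_subtype_eq h := by
    obtain ⟨h', rfl⟩ :=
      Module.projective_lifting_property _ h (LinearMap.range f).mkQ_surjective
    obtain ⟨g, rfl⟩ := hD.exists_comp_subtype_eq h'
    exact ⟨_ ∘ₗ g, LinearMap.comp_assoc _ _ _⟩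

theorem of_submodule_of_quotient [Module.Projective R P] {E : Type*} [AddCommGroup E] [Module R E]
    {A : Submodule R E} (hA : K.IsQuotOrthogonal A) (hQ : K.IsQuotOrthogonal (E ⧸ A)) :
    K.IsQuotOrthogonal E where
  eq_zero_of_comp_subtype g hg := by
    have hAg : A.mkQ ∘ₗ g = 0 := hQ.eq_zero_of_comp_subtype _ <| by
      rw [LinearMap.comp_assoc, hg, LinearMap.comp_zero]
    obtain ⟨g', rfl⟩ := Submodule.exists_subtype_comp_eq_of_range_le (A := A) (φ := g) <| by
      rwa [← Submodule.ker_mkQ A, LinearMap.range_le_ker_iff]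
    have : g' = 0 := hA.eq_zero_of_comp_subtype _ <|
      (LinearMap.cancel_left A.injective_subtype).mp (by rwa [LinearMap.comp_zero])
    rw [this, LinearMap.comp_zero]
  exists_comp_subtype_eq h := by
    obtain ⟨g', hg'⟩ := hQ.exists_comp_subtype_eq (A.mkQ ∘ₗ h)
    obtain ⟨g, rfl⟩ := Module.projective_lifting_property _ g' A.mkQ_surjective
    obtain ⟨k, hk⟩ := Submodule.exists_subtype_comp_eq_of_range_le (A := A)
        (φ := h - g ∘ₗ K.subtype) <| by
      rw [← Submodule.ker_mkQ A, LinearMap.range_le_ker_iff, LinearMap.comp_sub, ← hg',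
        LinearMap.comp_assoc, sub_self]
    obtain ⟨k', rfl⟩ := hA.exists_comp_subtype_eq k
    refine ⟨g + A.subtype ∘ₗ k', ?_⟩
    rw [LinearMap.add_comp, LinearMap.comp_assoc, hk, add_sub_cancel]

theorem pi {ι : Type*} {M : ι → Type*} [∀ i, AddCommGroup (M i)] [∀ i, Module R (M i)]
    (hM : ∀ i, K.IsQuotOrthogonal (M i)) : K.IsQuotOrthogonal (∀ i, M i) where
  eq_zero_of_comp_subtype g hg := by
    ext x i
    have := (hM i).eq_zero_of_comp_subtype (LinearMap.proj i ∘ₗ g) <| by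
      rw [LinearMap.comp_assoc, hg, LinearMap.comp_zero]
    exact LinearMap.congr_fun this x
  exists_comp_subtype_eq h := by
    choose g hg using fun i => (hM i).exists_comp_subtype_eq (LinearMap.proj i ∘ₗ h)
    refine ⟨LinearMap.pi g, ?_⟩
    ext x i
    exact LinearMap.congr_fun (hg i) x

end IsQuotOrthogonal

end Submodule

namespace CategoryTheory.ProjectiveResolution

universe u
variable {R : Type u} [Ring R] {X : ModuleCat.{u} R} (P : ProjectiveResolution X)

theorem subsingleton_ext_succ_iff (Y : ModuleCat.{u} R) (n : ℕ) :
    Subsingleton (((Ext ℤ (ModuleCat R) (n + 1)).obj (op X)).obj Y) ↔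
      ∀ h : P.complex.X (n + 1) →ₗ[R] Y, h ∘ₗ (P.complex.d (n + 2) (n + 1)).hom = 0 →
        ∃ g : P.complex.X n →ₗ[R] Y, g ∘ₗ (P.complex.d (n + 1) n).hom = h := by
  rw [← ModuleCat.isZero_iff_subsingleton, (P.isoExt (n + 1) Y).isZero_iff,
    ← HomologicalComplex.exactAt_iff_isZero_homology,
    HomologicalComplex.exactAt_iff' _ n (n + 1) (n + 2) (CochainComplex.prev_nat_succ n) (by simp),
    ShortComplex.moduleCat_exact_iff]
  constructor
  · intro hex h hh
    obtain ⟨g, hg⟩ := hex (ModuleCat.ofHom h) (by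
      show P.complex.d (n + 2) (n + 1) ≫ ModuleCat.ofHom h = 0
      ext x; exact LinearMap.congr_fun hh x)
    exact ⟨g.hom, congrArg ModuleCat.Hom.hom hg⟩
  · intro hex h hh
    obtain ⟨g, hg⟩ := hex h.hom (congrArg ModuleCat.Hom.hom hh)
    exact ⟨ModuleCat.ofHom g, ModuleCat.hom_ext hg⟩

theorem subsingleton_hom_iff (Y : ModuleCat.{u} R) :
    Subsingleton (X ⟶ Y) ↔
      ∀ g : P.complex.X 0 →ₗ[R] Y, g ∘ₗ (P.complex.d 1 0).hom = 0 → g = 0 := by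
  refine (Cofork.IsColimit.homIso P.isColimitCokernelCofork Y).subsingleton_congr.trans ?_
  simp only [zero_comp]
  constructor
  · intro _ g hg
    have := Subsingleton.elim (α := {h : P.complex.X 0 ⟶ Y // P.complex.d 1 0 ≫ h = 0})
      ⟨ModuleCat.ofHom g, ModuleCat.hom_ext hg⟩ ⟨0, comp_zero⟩
    exact congrArg (fun h => h.1.hom) this
  · intro H
    have : ∀ h : {h : P.complex.X 0 ⟶ Y // P.complex.d 1 0 ≫ h = 0}, h.1 = 0 := fun h =>
      ModuleCat.hom_ext (H h.1.hom (congrArg ModuleCat.Hom.hom h.2))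
    exact ⟨fun a b => Subtype.ext ((this a).trans (this b).symm)⟩

theorem range_d_eq_ker_d (n : ℕ) :
    LinearMap.range (P.complex.d (n + 2) (n + 1)).hom =
      LinearMap.ker (P.complex.d (n + 1) n).hom :=
  (P.exact_succ n).moduleCat_range_eq_ker

theorem subsingleton_ext_one_iff_s2 (Y : ModuleCat.{u} R) :
    Subsingleton (((Ext ℤ (ModuleCat R) 1).obj (op X)).obj Y) ↔
      ∀ h : LinearMap.range (P.complex.d 1 0).hom →ₗ[R] Y,
        ∃ g : P.complex.X 0 →ₗ[R] Y, g ∘ₗ (LinearMap.range (P.complex.d 1 0).hom).subtype = h := by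
  have hexact : Function.Exact (P.complex.d 2 1).hom (P.complex.d 1 0).hom.rangeRestrict :=
    LinearMap.exact_iff.mpr (by rw [LinearMap.ker_rangeRestrict]; exact (P.range_d_eq_ker_d 0).symm)
  have hsurj := (P.complex.d 1 0).hom.surjective_rangeRestrict
  rw [P.subsingleton_ext_succ_iff Y 0]
  constructor
  · intro H h
    obtain ⟨g, hg⟩ := H (h ∘ₗ (P.complex.d 1 0).hom.rangeRestrict) (by
      rw [LinearMap.comp_assoc, hexact.linearMap_comp_eq_zero, LinearMap.comp_zero])
    exact ⟨g, (LinearMap.cancel_right hsurj).mp hg⟩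
  · intro H h hh
    obtain ⟨h', rfl⟩ := hexact.exists_comp_eq_of_comp_eq_zero hsurj hh
    obtain ⟨g, rfl⟩ := H h'
    exact ⟨g, rfl⟩

theorem projective_range_d_one
    (h : Subsingleton (((Ext ℤ (ModuleCat R) 2).obj (op X)).obj
      (ModuleCat.of R (LinearMap.ker (P.complex.d 1 0).hom)))) :
    Module.Projective R (LinearMap.range (P.complex.d 1 0).hom) := by
  set d₁ := (P.complex.d 1 0).hom
  rw [P.subsingleton_ext_succ_iff _ 1] at h
  have hd₂ : ∀ x, (P.complex.d 2 1).hom x ∈ LinearMap.ker d₁ := fun x =>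
    (P.range_d_eq_ker_d 0).le (LinearMap.mem_range_self _ x)
  -- Extending `d₂ : P₂ → ker d₁` over `P₁` gives a retraction of `ker d₁ = im d₂ ↪ P₁`,
  -- so `im d₁ ≅ P₁ ⧸ ker d₁` is a direct summand of `P₁`.
  obtain ⟨r, hr⟩ := h ((P.complex.d 2 1).hom.codRestrict _ hd₂) <| by
    ext x
    exact LinearMap.congr_fun (congrArg ModuleCat.Hom.hom (P.complex.d_comp_d 3 2 1)) x
  have hretract : r ∘ₗ (LinearMap.ker d₁).subtype = LinearMap.id := by
    ext ⟨x, hx⟩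
    obtain ⟨y, rfl⟩ := (P.range_d_eq_ker_d 0).ge hx
    exact congrArg Subtype.val (LinearMap.congr_fun hr y)
  have hexact : Function.Exact (LinearMap.ker d₁).subtype d₁.rangeRestrict :=
    LinearMap.exact_iff.mpr (by rw [LinearMap.ker_rangeRestrict, Submodule.range_subtype])
  have hsplit :=
    hexact.split_tfae (LinearMap.ker d₁).injective_subtype d₁.surjective_rangeRestrict
  obtain ⟨s, hs⟩ : ∃ s, d₁.rangeRestrict ∘ₗ s = LinearMap.id := (hsplit.out 0 1).mpr
    (show ∃ l, l ∘ₗ (LinearMap.ker d₁).subtype = LinearMap.id from ⟨r, hretract⟩)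
  exact Module.Projective.of_split s _ hs

theorem isExt01Orthogonal_iff {R : Type} [Ring R] {U : Type} [AddCommGroup U] [Module R U]
    (P : ProjectiveResolution (ModuleCat.of R U)) (Y : Type) [AddCommGroup Y] [Module R Y] :
    IsExt01Orthogonal R U Y ↔ (LinearMap.range (P.complex.d 1 0).hom).IsQuotOrthogonal Y := by
  have hHom : Subsingleton (U →ₗ[R] Y) ↔ ∀ g : P.complex.X 0 →ₗ[R] Y,
      g ∘ₗ (LinearMap.range (P.complex.d 1 0).hom).subtype = 0 → g = 0 := by
    rw [← (ModuleCat.homEquiv (M := ModuleCat.of R U) (N := ModuleCat.of R Y)).subsingleton_congr,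
      P.subsingleton_hom_iff]
    simp only [← LinearMap.range_le_ker_iff, Submodule.range_subtype]
  rw [IsExt01Orthogonal, hHom, P.subsingleton_ext_one_iff_s2]
  exact ⟨fun ⟨h₀, h₁⟩ => ⟨h₀, h₁⟩, fun h => ⟨h.1, h.2⟩⟩

end CategoryTheory.ProjectiveResolution

/-- If `U` is a left `R`-module of projective dimension at most `1`
(i.e. `Ext²_R(U,−)` vanishes identically), then the class of left `R`-modules `C` with
`Hom_R(U,C) = 0 = Ext¹_R(U,C)` is closed under kernels, cokernels, extensions and
arbitrary products. -/
theorem isExt01Orthogonal_closed_under_ker_coker_ext_prod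
    (R : Type) [Ring R] (U : Type) [AddCommGroup U] [Module R U]
    (hpd : ∀ (C : Type) [AddCommGroup C] [Module R C],
      Subsingleton (((Ext ℤ (ModuleCat R) 2).obj
        (op (ModuleCat.of R U))).obj (ModuleCat.of R C))) :
    (∀ (C D : Type) [AddCommGroup C] [Module R C] [AddCommGroup D] [Module R D],
      IsExt01Orthogonal R U C → IsExt01Orthogonal R U D → ∀ f : C →ₗ[R] D,
        IsExt01Orthogonal R U (LinearMap.ker f)) ∧
    (∀ (C D : Type) [AddCommGroup C] [Module R C] [AddCommGroup D] [Module R D],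
      IsExt01Orthogonal R U C → IsExt01Orthogonal R U D → ∀ f : C →ₗ[R] D,
        IsExt01Orthogonal R U (D ⧸ LinearMap.range f)) ∧
    (∀ (E : Type) [AddCommGroup E] [Module R E] (A : Submodule R E),
      IsExt01Orthogonal R U A → IsExt01Orthogonal R U (E ⧸ A) →
        IsExt01Orthogonal R U E) ∧
    (∀ (ι : Type) (M : ι → Type) [∀ i, AddCommGroup (M i)] [∀ i, Module R (M i)],
      (∀ i, IsExt01Orthogonal R U (M i)) → IsExt01Orthogonal R U (∀ i, M i)) := by
  obtain ⟨P⟩ := HasProjectiveResolution.out (Z := ModuleCat.of R U)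
  have := P.projective_range_d_one (hpd _)
  simp only [P.isExt01Orthogonal_iff]
  refine ⟨?_, ?_, ?_, ?_⟩
  · intro C D _ _ _ _ hC hD f
    exact hC.ker hD f
  · intro C D _ _ _ _ hC hD f
    exact hC.quotient_range hD f
  · intro E _ _ A hA hQ
    exact hA.of_submodule_of_quotient hQ
  · intro ι M _ _ hM
    exact Submodule.IsQuotOrthogonal.pi hM
end

section
/- Let R be a commutative ring and s ∈ R. Every s-contraadjusted R-module C (i.e., one with Ext¹_R(R[s⁻¹], C) = 0) is s-adically complete: the natural map C → lim_{n} C/sⁿC is surjective. -/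
/-!
Since `Hom_R(R[X], C) ≅ C^ℕ` via `ψ ↦ (ψ (Xⁿ))ₙ` and
`0 → R[X] --(sX - 1)--> R[X] → R[s⁻¹] → 0` is a projective resolution, the vanishing of
`Ext¹_R(R[s⁻¹], C)` says that every sequence `(yₙ)` in `C` has the form `yₙ = s uₙ₊₁ - uₙ`.
An element of `lim C/sⁿC` is represented by `(cₙ)` with `cₙ₊₁ - cₙ = sⁿ yₙ`; solving for `(uₙ)`,
the element `z = c₀ - u₀` satisfies `cₙ - z = sⁿ uₙ`, so it is a preimage.
-/

open CategoryTheory Opposite Limits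

namespace CategoryTheory.ProjectiveResolution

variable {C : Type*} [Category* C] [Abelian C]

section ofShortExact

open HomologicalComplex

variable {S : ShortComplex C}

/-- `HomologicalComplex.double` puts `S.X₁` in degree `1` and `S.X₂` in degree `0`. -/
noncomputable abbrev ofShortExactComplex (S : ShortComplex C) : ChainComplex C ℕ :=
  double S.f (ComplexShape.down_mk 1 0 rfl)

noncomputable def ofShortExactXIso₁ (S : ShortComplex C) :
    (ofShortExactComplex S).X 1 ≅ S.X₁ :=
  doubleXIso₀ _ _

noncomputable def ofShortExactXIso₀ (S : ShortComplex C) :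
    (ofShortExactComplex S).X 0 ≅ S.X₂ :=
  doubleXIso₁ _ _ one_ne_zero

lemma ofShortExactComplex_d_one_zero :
    (ofShortExactComplex S).d 1 0 = (ofShortExactXIso₁ S).hom ≫ S.f ≫ (ofShortExactXIso₀ S).inv :=
  double_d _ _ _

lemma isZero_ofShortExactComplex_X (n : ℕ) : IsZero ((ofShortExactComplex S).X (n + 2)) :=
  isZero_double_X _ _ _ (by omega) (by omega)

instance [Projective S.X₁] [Projective S.X₂] (n : ℕ) :
    Projective ((ofShortExactComplex S).X n) :=
  match n with
  | 0 => Projective.of_iso (ofShortExactXIso₀ S).symm inferInstance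
  | 1 => Projective.of_iso (ofShortExactXIso₁ S).symm inferInstance
  | n + 2 => (isZero_ofShortExactComplex_X n).projective

noncomputable def ofShortExactπ (S : ShortComplex C) :
    ofShortExactComplex S ⟶ (ChainComplex.single₀ C).obj S.X₃ :=
  (ChainComplex.toSingle₀Equiv _ _).symm
    ⟨(ofShortExactXIso₀ S).hom ≫ S.g, by simp [ofShortExactComplex_d_one_zero]⟩

lemma ofShortExactπ_f_zero : (ofShortExactπ S).f 0 = (ofShortExactXIso₀ S).hom ≫ S.g :=
  ChainComplex.toSingle₀Equiv_symm_apply_f_zero _ _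

lemma ofShortExactComplex_exactAt_succ (hS : S.ShortExact) (n : ℕ) :
    (ofShortExactComplex S).ExactAt (n + 1) := by
  match n with
  | 0 =>
    rw [exactAt_iff' _ 2 1 0 (by simp) (by simp),
      ShortComplex.exact_iff_mono _ ((isZero_ofShortExactComplex_X 0).eq_of_src _ _)]
    have := hS.mono_f
    show Mono ((ofShortExactComplex S).d 1 0)
    rw [ofShortExactComplex_d_one_zero]
    infer_instance
  | n + 1 =>
    rw [exactAt_iff]
    exact ShortComplex.exact_of_isZero_X₂ _ (isZero_ofShortExactComplex_X n)

noncomputable def ofShortExact (hS : S.ShortExact) [Projective S.X₁] [Projective S.X₂] :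
    ProjectiveResolution S.X₃ where
  complex := ofShortExactComplex S
  π := ofShortExactπ S
  quasiIso := ⟨fun n => by
    cases n with
    | zero =>
      rw [ChainComplex.quasiIsoAt₀_iff, ShortComplex.quasiIso_iff_of_zeros']
      · refine (ShortComplex.exact_and_epi_g_iff_of_iso ?_).2 ⟨hS.exact, hS.epi_g⟩
        refine ShortComplex.isoMk (ofShortExactXIso₁ S) (ofShortExactXIso₀ S) (Iso.refl _) ?_ ?_
        · change _ = (ofShortExactComplex S).d 1 0 ≫ _
          simp [ofShortExactComplex_d_one_zero]
          rfl
        · change _ = (ofShortExactπ S).f 0 ≫ 𝟙 _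
          rw [Category.comp_id, ofShortExactπ_f_zero]
          rfl
      · exact (ofShortExactComplex S).shape 0 0 (by simp)
      · exact (isZero_single_obj_X (ComplexShape.down ℕ) 0 S.X₃ 1 (by simp)).eq_of_src _ _
      · exact ((ChainComplex.single₀ C).obj S.X₃).shape 0 0 (by simp)
    | succ n =>
      rw [quasiIsoAt_iff_exactAt' _ _ (ChainComplex.exactAt_succ_single_obj _ _)]
      exact ofShortExactComplex_exactAt_succ hS n⟩

end ofShortExact

section Ext

variable {R : Type*} [Ring R] [Linear R C] [EnoughProjectives C]

lemma exists_d_comp_eq_of_isZero_Ext {X Y : C} (P : ProjectiveResolution X) {n : ℕ}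
    (hExt : IsZero (((Ext R C (n + 1)).obj (op X)).obj Y)) (φ : P.complex.X (n + 1) ⟶ Y)
    (hφ : P.complex.d (n + 2) (n + 1) ≫ φ = 0) :
    ∃ ψ : P.complex.X n ⟶ Y, P.complex.d (n + 1) n ≫ ψ = φ := by
  have hexact : (P.complex.linearYonedaObj R Y).ExactAt (n + 1) := by
    rw [HomologicalComplex.exactAt_iff_isZero_homology]
    exact hExt.of_iso (P.isoExt (n + 1) Y).symm
  rw [HomologicalComplex.exactAt_iff' _ n (n + 1) (n + 2) (by simp) (by simp),
    ShortComplex.moduleCat_exact_iff] at hexact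
  exact hexact φ hφ

lemma _root_.CategoryTheory.ShortComplex.ShortExact.exists_comp_eq_of_isZero_Ext
    {S : ShortComplex C} (hS : S.ShortExact) [Projective S.X₁] [Projective S.X₂] {Y : C}
    (hExt : IsZero (((Ext R C 1).obj (op S.X₃)).obj Y)) (φ : S.X₁ ⟶ Y) :
    ∃ ψ : S.X₂ ⟶ Y, S.f ≫ ψ = φ := by
  obtain ⟨ψ, hψ⟩ : ∃ ψ : (ofShortExactComplex S).X 0 ⟶ Y,
      (ofShortExactComplex S).d 1 0 ≫ ψ = (ofShortExactXIso₁ S).hom ≫ φ :=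
    (ofShortExact hS).exists_d_comp_eq_of_isZero_Ext hExt _
      ((isZero_ofShortExactComplex_X 0).eq_of_src _ _)
  refine ⟨(ofShortExactXIso₀ S).inv ≫ ψ, ?_⟩
  rw [← cancel_epi (ofShortExactXIso₁ S).hom, ← hψ, ofShortExactComplex_d_one_zero]
  simp

end Ext

end CategoryTheory.ProjectiveResolution

section Polynomial

open Polynomial nonZeroDivisors

variable {R : Type*} [CommRing R]

lemma Polynomial.C_mul_X_sub_one_mem_nonZeroDivisors (s : R) : C s * X - 1 ∈ R[X]⁰ :=
  mem_nonzeroDivisors_of_coeff_mem 0 (by simpa using isUnit_neg_one.mem_nonZeroDivisors)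

namespace Localization.Away

noncomputable def polynomialPresentation (s : R) : ShortComplex (ModuleCat R) :=
  ShortComplex.moduleCatMk (LinearMap.mulLeft R (C s * X - 1))
    ((awayEquivAdjoin s).symm.toAlgHom.comp (AdjoinRoot.mkₐ (C s * X - 1))).toLinearMap
    (by ext p; simp)

lemma shortExact_polynomialPresentation (s : R) : (polynomialPresentation s).ShortExact := by
  apply ModuleCat.shortComplex_shortExact
  · intro (p : R[X])
    change (awayEquivAdjoin s).symm (AdjoinRoot.mk _ p) = 0 ↔ ∃ q, (C s * X - 1) * q = p
    rw [EmbeddingLike.map_eq_zero_iff, AdjoinRoot.mk_eq_zero, dvd_def]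
    exact exists_congr fun _ => eq_comm
  · exact fun p q =>
      (mul_cancel_left_mem_nonZeroDivisors (C_mul_X_sub_one_mem_nonZeroDivisors s)).1
  · intro (a : Localization.Away s)
    obtain ⟨p, hp⟩ := AdjoinRoot.mk_surjective (awayEquivAdjoin s a)
    refine ⟨p, ?_⟩
    change (awayEquivAdjoin s).symm (AdjoinRoot.mk _ p) = a
    rw [hp, AlgEquiv.symm_apply_apply]

instance (s : R) : Projective (polynomialPresentation s).X₁ :=
  inferInstanceAs (Projective (ModuleCat.of R R[X]))

instance (s : R) : Projective (polynomialPresentation s).X₂ :=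
  inferInstanceAs (Projective (ModuleCat.of R R[X]))

end Localization.Away

variable {M : Type*} [AddCommGroup M] [Module R M] (s : R)

lemma mem_span_singleton_pow_smul_top_iff {n : ℕ} {x : M} :
    x ∈ (Ideal.span {s} ^ n • ⊤ : Submodule R M) ↔ ∃ y, s ^ n • y = x := by
  rw [Ideal.span_singleton_pow, Submodule.ideal_span_singleton_smul,
    Submodule.mem_smul_pointwise_iff_exists]
  simp

lemma isPrecomplete_span_singleton_of_forall_exists_smul_succ_sub_eq
    (h : ∀ y : ℕ → M, ∃ u : ℕ → M, ∀ n, s • u (n + 1) - u n = y n) :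
    IsPrecomplete (Ideal.span {s}) M := by
  refine ⟨fun c hc => ?_⟩
  have hstep : ∀ n, ∃ y, s ^ n • y = c (n + 1) - c n := fun n =>
    (mem_span_singleton_pow_smul_top_iff s).1 (SModEq.sub_mem.1 (hc n.le_succ).symm)
  choose y hy using hstep
  obtain ⟨u, hu⟩ := h y
  have hlim : ∀ n, c n - (c 0 - u 0) = s ^ n • u n := by
    intro n
    induction n with
    | zero => simp
    | succ n ih =>
      calc c (n + 1) - (c 0 - u 0) = (c n - (c 0 - u 0)) + (c (n + 1) - c n) := by abel
      _ = s ^ n • u n + s ^ n • (s • u (n + 1) - u n) := by rw [ih, ← hy, hu]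
      _ = s ^ (n + 1) • u (n + 1) := by rw [smul_sub, smul_smul, ← pow_succ]; abel
  exact ⟨c 0 - u 0, fun n =>
    SModEq.sub_mem.2 ((mem_span_singleton_pow_smul_top_iff s).2 ⟨u n, (hlim n).symm⟩)⟩

lemma exists_smul_succ_sub_eq_of_forall_exists_comp_mulLeft
    (h : ∀ φ : R[X] →ₗ[R] M, ∃ ψ : R[X] →ₗ[R] M, ψ ∘ₗ LinearMap.mulLeft R (C s * X - 1) = φ)
    (y : ℕ → M) : ∃ u : ℕ → M, ∀ n, s • u (n + 1) - u n = y n := by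
  obtain ⟨ψ, hψ⟩ := h ((basisMonomials R).constr ℕ y)
  refine ⟨fun n => ψ (X ^ n), fun n => ?_⟩
  have hX : (C s * X - 1) * X ^ n = s • X ^ (n + 1) - X ^ n := by
    rw [smul_eq_C_mul]
    ring
  have hb : basisMonomials R n = X ^ n := by rw [coe_basisMonomials, X_pow_eq_monomial]
  have hφ := (basisMonomials R).constr_basis ℕ y n
  rw [hb, ← hψ, LinearMap.comp_apply, LinearMap.mulLeft_apply, hX, map_sub, map_smul] at hφ
  exact hφ

end Polynomial

/-- Over a commutative ring `R`, every `s`-contraadjusted `R`-module `C`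
(one with `Ext¹_R(R[s⁻¹],C) = 0`) is `s`-adically complete: the natural map
`C → lim_n C/sⁿC` is surjective. -/
theorem sContraadjusted_implies_sAdically_complete
    (R : Type) [CommRing R] (s : R) (C : Type) [AddCommGroup C] [Module R C]
    (h : Subsingleton (((Ext R (ModuleCat R) 1).obj
      (op (ModuleCat.of R (Localization.Away s)))).obj (ModuleCat.of R C))) :
    Function.Surjective (AdicCompletion.of (Ideal.span {s}) C) := by
  rw [AdicCompletion.of_surjective_iff]
  refine isPrecomplete_span_singleton_of_forall_exists_smul_succ_sub_eq s
    (exists_smul_succ_sub_eq_of_forall_exists_comp_mulLeft s fun φ => ?_)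
  obtain ⟨ψ, hψ⟩ :=
    (Localization.Away.shortExact_polynomialPresentation s).exists_comp_eq_of_isZero_Ext
      (@ModuleCat.isZero_of_subsingleton _ _ _ h) (ModuleCat.ofHom φ)
  exact ⟨ψ.hom, congrArg ModuleCat.Hom.hom hψ⟩
end

section
/- Let R be a commutative ring, s ∈ R, and C an s-torsion-free R-module that is an s-contramodule. Then C is s-adically separated, i.e., ⋂_{n≥1} sⁿC = 0. -/
/-!
Torsion-freeness makes `⋂ₙ sⁿC` an `s`-divisible submodule on which `s` acts bijectively, i.e. a
module over `R[s⁻¹]`. So each of its elements `x` is the image of `1` under the linear map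
`R[s⁻¹] → C`, `r / sⁿ ↦ r • s⁻ⁿ x`, which vanishes because `Hom_R(R[s⁻¹], C) = 0`.
-/

namespace Submodule

variable {R : Type*} [CommSemiring R] (s : R) (M : Type*) [AddCommMonoid M] [Module R M]

def infinitelyDivisible : Submodule R M :=
  ⨅ n : ℕ, LinearMap.range (DistribSMul.toLinearMap R M (s ^ n))

variable {s M}

theorem mem_infinitelyDivisible {x : M} :
    x ∈ infinitelyDivisible s M ↔ ∀ n : ℕ, ∃ y : M, s ^ n • y = x := by
  simp [infinitelyDivisible, Submodule.mem_iInf]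

theorem exists_smul_eq_of_mem_infinitelyDivisible (hs : IsSMulRegular M s) {x : M}
    (hx : x ∈ infinitelyDivisible s M) : ∃ y ∈ infinitelyDivisible s M, s • y = x := by
  simp_rw [mem_infinitelyDivisible] at hx ⊢
  obtain ⟨y, hy⟩ := hx 1
  refine ⟨y, fun n => ?_, by simpa using hy⟩
  obtain ⟨z, hz⟩ := hx (n + 1)
  exact ⟨z, hs (show s • s ^ n • z = s • y by rw [← mul_smul, ← pow_succ', hz, ← hy, pow_one])⟩

theorem isUnit_algebraMap_end_infinitelyDivisible (hs : IsSMulRegular M s) :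
    IsUnit (algebraMap R (Module.End R (infinitelyDivisible s M)) s) := by
  refine (Module.End.isUnit_iff _).2 ⟨fun y z h => Subtype.ext (hs (congrArg Subtype.val h)), ?_⟩
  rintro ⟨x, hx⟩
  obtain ⟨y, hy, rfl⟩ := exists_smul_eq_of_mem_infinitelyDivisible hs hx
  exact ⟨⟨y, hy⟩, rfl⟩

theorem exists_linearMap_localizationAway_apply_one (hs : IsSMulRegular M s) {x : M}
    (hx : x ∈ infinitelyDivisible s M) : ∃ f : Localization.Away s →ₗ[R] M, f 1 = x := by
  let D := infinitelyDivisible s M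
  have hunit : ∀ t : Submonoid.powers s, IsUnit (algebraMap R (Module.End R D) t) := by
    rintro ⟨_, n, rfl⟩
    simpa using (isUnit_algebraMap_end_infinitelyDivisible hs).pow n
  let g := LinearMap.toSpanSingleton R D ⟨x, hx⟩
  let ι := Algebra.linearMap R (Localization.Away s)
  refine ⟨D.subtype ∘ₗ IsLocalizedModule.lift (Submonoid.powers s) ι g hunit, ?_⟩
  have hlift := IsLocalizedModule.lift_apply (Submonoid.powers s) ι g hunit 1
  rw [Algebra.linearMap_apply, map_one] at hlift
  simp [hlift, g]

theorem infinitelyDivisible_eq_bot (hs : IsSMulRegular M s)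
    [Subsingleton (Localization.Away s →ₗ[R] M)] : infinitelyDivisible s M = ⊥ := by
  refine (Submodule.eq_bot_iff _).2 fun x hx => ?_
  obtain ⟨f, rfl⟩ := exists_linearMap_localizationAway_apply_one hs hx
  rw [Subsingleton.elim f 0, LinearMap.zero_apply]

end Submodule

open CategoryTheory Opposite

theorem sTorsionFree_sContramodule_implies_sSeparated_general
    (R : Type) [CommRing R] (s : R) (C : Type) [AddCommGroup C] [Module R C]
    (htf : Function.Injective (fun x : C => s • x))
    (hhom : Subsingleton (Localization.Away s →ₗ[R] C)) :
    ∀ x : C, (∀ n : ℕ, ∃ y : C, x = s ^ (n + 1) • y) → x = 0 := by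
  intro x hx
  have hmem : x ∈ Submodule.infinitelyDivisible s C := by
    refine Submodule.mem_infinitelyDivisible.2 fun n => ?_
    cases n with
    | zero => exact ⟨x, pow_zero s ▸ one_smul R x⟩
    | succ n => exact (hx n).imp fun y hy => hy.symm
  simpa [Submodule.infinitelyDivisible_eq_bot htf] using hmem

/-- Over a commutative ring `R`, every `s`-torsion-free `s`-contramodule
`R`-module `C` is `s`-adically separated: `⋂_{n≥1} sⁿC = 0`. -/
theorem sTorsionFree_sContramodule_implies_sSeparated
    (R : Type) [CommRing R] (s : R) (C : Type) [AddCommGroup C] [Module R C]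
    (htf : Function.Injective (fun x : C => s • x))
    (hhom : Subsingleton (Localization.Away s →ₗ[R] C))
    (hext : Subsingleton (((Ext R (ModuleCat R) 1).obj
      (op (ModuleCat.of R (Localization.Away s)))).obj (ModuleCat.of R C))) :
    ∀ x : C, (∀ n : ℕ, ∃ y : C, x = s ^ (n + 1) • y) → x = 0 :=
  sTorsionFree_sContramodule_implies_sSeparated_general R s C htf hhom
end

section
/- Let C be an abelian group, and r, s : C → C two commuting endomorphisms. If C admits an s-power infinite summation operation (equivalently, C is an s-contramodule over ℤ[s]), then C admits an (rs)-power infinite summation operation (is an rs-contramodule over ℤ[r,s]). -/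
/-!
For any element `a` of a commutative ring `R` we have `R[a⁻¹] ≅ R[X]/(1 - aX)`, and `1 - aX` is
a non-zero-divisor, so multiplication by `1 - aX` gives a free resolution
`0 → R[X] → R[X] → R[a⁻¹] → 0`. Applying `Hom_R(-, C)` and identifying `Hom_R(R[X], C)` with
`ℕ → C` through the monomial basis, multiplication by `1 - aX` becomes the telescope operator
`f ↦ (fₙ - a fₙ₊₁)ₙ`. Hence `C` is an `a`-contramodule iff every system `fₙ - a fₙ₊₁ = gₙ`
has exactly one solution, the solution being the formal sum `fₙ = ∑ₘ aᵐ gₙ₊ₘ`.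

For `a = rs` one sums `∑ₘ (rs)ᵐ gₙ₊ₘ` as the `s`-power sum `∑ₘ sᵐ (rᵐ gₙ₊ₘ)`: the
reweighting `g ↦ (rᵐ gₙ₊ₘ)ₘ` intertwines the `rs`-telescope with the `s`-telescope.
-/

open CategoryTheory Opposite

/-- `C` is an `s`-contramodule over the commutative ring `R`:
`Hom_R(R[s⁻¹],C) = 0 = Ext¹_R(R[s⁻¹],C)`. -/
def IsContramodule (R : Type) [CommRing R] (s : R) (C : Type) [AddCommGroup C]
    [Module R C] : Prop :=
  Subsingleton (Localization.Away s →ₗ[R] C) ∧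
    Subsingleton (((Ext R (ModuleCat R) 1).obj
      (op (ModuleCat.of R (Localization.Away s)))).obj (ModuleCat.of R C))

open Function

section Telescope

variable {R : Type*} [CommRing R] {M : Type*} [AddCommGroup M] [Module R M]

variable (R M) in
def telescope (a : R) : (ℕ → M) →ₗ[R] (ℕ → M) :=
  LinearMap.id - a • LinearMap.funLeft R M Nat.succ

@[simp]
lemma telescope_apply (a : R) (f : ℕ → M) (n : ℕ) :
    telescope R M a f n = f n - a • f (n + 1) := rfl

def powSmulShift (r : R) (n : ℕ) (f : ℕ → M) : ℕ → M := fun m => r ^ m • f (n + m)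

lemma telescope_powSmulShift (r s : R) (n : ℕ) (f : ℕ → M) :
    telescope R M s (powSmulShift r n f) = powSmulShift r n (telescope R M (r * s) f) := by
  funext m
  simp only [telescope_apply, powSmulShift, smul_sub, smul_smul, ← add_assoc]
  congr 2
  ring

theorem bijective_telescope_mul {r s : R} (h : Bijective (telescope R M s)) :
    Bijective (telescope R M (r * s)) := by
  constructor
  · rw [← LinearMap.ker_eq_bot, LinearMap.ker_eq_bot']
    intro f hf
    funext n
    have hW : powSmulShift r n f = 0 := h.1 <| by
      rw [telescope_powSmulShift, hf, map_zero]
      funext m; simp [powSmulShift]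
    simpa [powSmulShift] using congrFun hW 0
  · intro g
    choose u hu using fun n => h.2 (powSmulShift r n g)
    have hshift (n : ℕ) : (fun m => u n (m + 1)) = r • u (n + 1) := h.1 <| by
      funext m
      have h₁ := congrFun (hu n) (m + 1)
      have h₂ := congrFun (hu (n + 1)) m
      simp only [telescope_apply, powSmulShift, Pi.smul_apply] at h₁ h₂ ⊢
      rw [h₁, smul_comm s r, ← smul_sub, h₂, smul_smul, ← pow_succ', add_right_comm n 1 m,
        add_assoc]
    refine ⟨fun n => u n 0, funext fun n => ?_⟩
    have h₀ := congrFun (hu n) 0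
    have h₁ := congrFun (hshift n) 0
    simp only [telescope_apply, powSmulShift, Pi.smul_apply, zero_add, pow_zero, one_smul,
      add_zero] at h₀ h₁ ⊢
    rw [← h₀, h₁, smul_smul, mul_comm]

end Telescope

section AwayPresentation

open Polynomial

variable {R : Type*} [CommRing R] (a : R)

noncomputable def awayOfPolynomial : R[X] →ₗ[R] Localization.Away a :=
  ((Localization.awayEquivAdjoin a).symm.toAlgHom.comp (AdjoinRoot.mkₐ (C a * X - 1))).toLinearMap

lemma surjective_awayOfPolynomial : Surjective (awayOfPolynomial a) :=
  (Localization.awayEquivAdjoin a).symm.surjective.comp AdjoinRoot.mk_surjective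

lemma exact_mulLeft_awayOfPolynomial :
    Exact (LinearMap.mulLeft R (1 - C a * X)) (awayOfPolynomial a) := by
  intro p
  change (Localization.awayEquivAdjoin a).symm (AdjoinRoot.mk _ p) = 0 ↔ _
  rw [map_eq_zero_iff _ (AlgEquiv.injective _), AdjoinRoot.mk_eq_zero, ← neg_dvd, neg_sub]
  exact exists_congr fun _ => eq_comm

lemma injective_mulLeft_one_sub_C_mul_X : Injective (LinearMap.mulLeft R (1 - C a * X)) := by
  have hreg : IsRegular (1 - C a * X) := by
    rw [isRegular_iff_mem_nonZeroDivisors]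
    nontriviality R
    refine mem_nonZeroDivisors_of_trailingCoeff ?_
    rw [trailingCoeff_eq_coeff_zero] <;> simp
  exact hreg.left

lemma lcomp_mulLeft_one_sub_C_mul_X_constr {M : Type*} [AddCommGroup M] [Module R M]
    (f : ℕ → M) :
    LinearMap.lcomp R M (LinearMap.mulLeft R (1 - C a * X)) ((basisMonomials R).constr R f) =
      (basisMonomials R).constr R (telescope R M a f) := by
  refine (basisMonomials R).ext fun n => ?_
  have hconstr (g : ℕ → M) (k : ℕ) : (basisMonomials R).constr R g (monomial k 1) = g k := by
    simpa using (basisMonomials R).constr_basis R g k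
  simp only [LinearMap.lcomp_apply, LinearMap.mulLeft_apply, coe_basisMonomials, sub_mul, one_mul,
    mul_assoc, X_mul_monomial, C_mul_monomial]
  rw [← smul_eq_mul, ← smul_monomial, map_sub, map_smul, hconstr, hconstr, hconstr,
    telescope_apply]

lemma lcomp_mulLeft_one_sub_C_mul_X_eq_conj {M : Type*} [AddCommGroup M] [Module R M] :
    ⇑(LinearMap.lcomp R M (LinearMap.mulLeft R (1 - C a * X))) =
      (basisMonomials R).constr R ∘ telescope R M a ∘ ((basisMonomials R).constr R).symm := by
  funext φ
  obtain ⟨f, rfl⟩ := ((basisMonomials R).constr (M' := M) R).surjective φ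
  simp [lcomp_mulLeft_one_sub_C_mul_X_constr]

end AwayPresentation

section Resolution

open Limits

variable {R : Type} [CommRing R] {P₁ P₀ M : Type} [AddCommGroup P₁] [Module R P₁]
  [AddCommGroup P₀] [Module R P₀] [AddCommGroup M] [Module R M]

theorem subsingleton_linearMap_iff_injective_lcomp {d : P₁ →ₗ[R] P₀} {π : P₀ →ₗ[R] M}
    (hexact : Exact d π) (hπ : Surjective π) (N : Type*) [AddCommGroup N] [Module R N] :
    Subsingleton (M →ₗ[R] N) ↔ Injective (LinearMap.lcomp R N d) := by
  have hlcomp := LinearMap.exact_lcomp_of_exact_of_surjective N hexact hπ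
  rw [← LinearMap.ker_eq_bot, hlcomp.linearMap_ker_eq, LinearMap.range_eq_bot]
  refine ⟨fun _ => Subsingleton.elim _ _, fun h => subsingleton_of_forall_eq 0 fun ψ => ?_⟩
  exact LinearMap.lcomp_injective_of_surjective π hπ (by rw [h, map_zero, LinearMap.zero_apply])

variable (d : P₁ →ₗ[R] P₀)

def twoTermComplex : ChainComplex (ModuleCat R) ℕ :=
  ChainComplex.of (fun n => match n with
      | 0 => .of R P₀
      | 1 => .of R P₁
      | _ + 2 => .of R PUnit)
    (fun n => match n with
      | 0 => ModuleCat.ofHom d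
      | _ + 1 => 0)
    (fun n => by cases n <;> exact zero_comp)

lemma isZero_twoTermComplex_X (n : ℕ) : IsZero ((twoTermComplex d).X (n + 2)) :=
  ModuleCat.isZero_of_subsingleton (.of R PUnit)

variable {d} {π : P₀ →ₗ[R] M}

noncomputable def twoTermComplexToSingle₀ (hexact : Exact d π) :
    twoTermComplex d ⟶ (ChainComplex.single₀ (ModuleCat R)).obj (.of R M) :=
  (ChainComplex.toSingle₀Equiv _ _).symm
    ⟨ModuleCat.ofHom π, ModuleCat.hom_ext hexact.linearMap_comp_eq_zero⟩

lemma quasiIso_twoTermComplexToSingle₀ (hd : Injective d) (hexact : Exact d π)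
    (hπ : Surjective π) : QuasiIso (twoTermComplexToSingle₀ hexact) where
  quasiIsoAt
    | 0 => by
      rw [ChainComplex.quasiIsoAt₀_iff, ShortComplex.quasiIso_iff_of_zeros' _ rfl rfl rfl]
      refine ⟨?_, (ModuleCat.epi_iff_surjective _).mpr hπ⟩
      rw [ShortComplex.moduleCat_exact_iff_range_eq_ker]
      exact hexact.linearMap_ker_eq.symm
    | n + 1 => by
      rw [quasiIsoAt_iff_exactAt' (hL := ChainComplex.exactAt_succ_single_obj ..),
        HomologicalComplex.exactAt_iff' _ (n + 2) (n + 1) n (by simp) (by simp)]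
      cases n with
      | zero =>
        rw [ShortComplex.exact_iff_mono _ ((isZero_twoTermComplex_X d 0).eq_of_src _ _),
          ModuleCat.mono_iff_injective]
        exact hd
      | succ n => exact ShortComplex.exact_of_isZero_X₂ _ (isZero_twoTermComplex_X d n)

variable [Module.Projective R P₁] [Module.Projective R P₀]

noncomputable def lengthOneProjectiveResolution (hd : Injective d) (hexact : Exact d π)
    (hπ : Surjective π) : ProjectiveResolution (ModuleCat.of R M) where
  complex := twoTermComplex d
  projective
    | 0 => inferInstanceAs (Projective (ModuleCat.of R P₀))
    | 1 => inferInstanceAs (Projective (ModuleCat.of R P₁))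
    | n + 2 => (isZero_twoTermComplex_X d n).projective
  π := twoTermComplexToSingle₀ hexact
  quasiIso := quasiIso_twoTermComplexToSingle₀ hd hexact hπ

theorem subsingleton_ext_one_iff_surjective_lcomp (hd : Injective d) (hexact : Exact d π)
    (hπ : Surjective π) (N : Type) [AddCommGroup N] [Module R N] :
    Subsingleton (((Ext R (ModuleCat R) 1).obj (op (.of R M))).obj (.of R N)) ↔
      Surjective (LinearMap.lcomp R N d) := by
  let P := lengthOneProjectiveResolution hd hexact hπ
  rw [← ModuleCat.isZero_iff_subsingleton, (P.isoExt 1 _).isZero_iff,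
    ← HomologicalComplex.exactAt_iff_isZero_homology,
    HomologicalComplex.exactAt_iff' _ 0 1 2 (by simp) (by simp),
    ShortComplex.exact_iff_epi _ (ModuleCat.hom_ext (LinearMap.ext fun _ =>
      (isZero_twoTermComplex_X d 0).eq_of_src _ _)), ModuleCat.epi_iff_surjective]
  let e : (ModuleCat.of R P₀ ⟶ .of R N) ≃ (P₀ →ₗ[R] N) := ModuleCat.homEquiv
  let e' : (ModuleCat.of R P₁ ⟶ .of R N) ≃ (P₁ →ₗ[R] N) := ModuleCat.homEquiv
  change Surjective (e'.symm ∘ LinearMap.lcomp R N d ∘ e) ↔ _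
  rw [EquivLike.comp_surjective, EquivLike.surjective_comp]

end Resolution

theorem isContramodule_iff_bijective_telescope {R : Type} [CommRing R] (a : R) (C : Type)
    [AddCommGroup C] [Module R C] :
    IsContramodule R a C ↔ Bijective (telescope R C a) := by
  have hd := injective_mulLeft_one_sub_C_mul_X a
  have hexact := exact_mulLeft_awayOfPolynomial a
  have hπ := surjective_awayOfPolynomial a
  rw [IsContramodule, subsingleton_linearMap_iff_injective_lcomp hexact hπ,
    subsingleton_ext_one_iff_surjective_lcomp hd hexact hπ, lcomp_mulLeft_one_sub_C_mul_X_eq_conj,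
    EquivLike.comp_injective, EquivLike.injective_comp, EquivLike.comp_surjective,
    EquivLike.surjective_comp]
  rfl

theorem IsContramodule.mul_left {R : Type} [CommRing R] {s : R} (r : R) {C : Type}
    [AddCommGroup C] [Module R C] (h : IsContramodule R s C) : IsContramodule R (r * s) C := by
  rw [isContramodule_iff_bijective_telescope] at h ⊢
  exact bijective_telescope_mul h

/-- An abelian group with two commuting endomorphisms `r`, `s` is the same
thing as a module `C` over `ℤ[r,s] = MvPolynomial (Fin 2) ℤ` (with `r = X 0`, `s = X 1`).
If `C` admits an `s`-power infinite summation operation (equivalently, `C` is an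
`s`-contramodule), then `C` admits an `(rs)`-power infinite summation operation
(is an `rs`-contramodule). -/
theorem isContramodule_mul_of_isContramodule
    (C : Type) [AddCommGroup C] [Module (MvPolynomial (Fin 2) ℤ) C]
    (h : IsContramodule (MvPolynomial (Fin 2) ℤ) (MvPolynomial.X 1) C) :
    IsContramodule (MvPolynomial (Fin 2) ℤ) (MvPolynomial.X 0 * MvPolynomial.X 1) C :=
  h.mul_left _
end

section
/- Let C be an abelian group with an [s,t]-power infinite summation operation, and D ⊂ C a subgroup with sD + tD = D. Then D = 0. -/
/-- An `[s,t]`-power infinite summation operation on an abelian group `C`: to every doubly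
indexed family `(a_{mn})_{m,n ≥ 0}` it assigns an element `Σ_{m,n} sᵐtⁿ a_{mn} ∈ C`,
satisfying additivity, contraunitality and contraassociativity. -/
structure STPowerSummation (C : Type) [AddCommGroup C] where
  /-- The formal sum `Σ_{m,n≥0} sᵐ tⁿ a m n`. -/
  sum : (ℕ → ℕ → C) → C
  /-- Additivity. -/
  add : ∀ a b : ℕ → ℕ → C,
    sum (fun m n => a m n + b m n) = sum a + sum b
  /-- Contraunitality: the sum equals `a 0 0` when all other entries vanish. -/
  unital : ∀ a : ℕ → ℕ → C, (∀ m n : ℕ, ¬(m = 0 ∧ n = 0) → a m n = 0) →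
    sum a = a 0 0
  /-- Contraassociativity: `Σ_{i,j} sⁱtʲ (Σ_{k,l} sᵏtˡ a_{ij,kl})
  = Σ_{m,n} sᵐtⁿ (Σ_{i+k=m, j+l=n} a_{ij,kl})`. -/
  assoc : ∀ a : ℕ → ℕ → ℕ → ℕ → C,
    sum (fun i j => sum (fun k l => a i j k l)) =
      sum (fun m n => ∑ i ∈ Finset.range (m + 1), ∑ j ∈ Finset.range (n + 1),
        a i j (m - i) (n - j))

/-- The endomorphism `s` of `C` induced by an `[s,t]`-power infinite summation operation:
summation of the family concentrated in position `(1,0)`. -/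
def STPowerSummation.sOp {C : Type} [AddCommGroup C] (S : STPowerSummation C) (x : C) : C :=
  S.sum (fun m n => if m = 1 ∧ n = 0 then x else 0)

/-- The endomorphism `t` of `C` induced by an `[s,t]`-power infinite summation operation:
summation of the family concentrated in position `(0,1)`. -/
def STPowerSummation.tOp {C : Type} [AddCommGroup C] (S : STPowerSummation C) (x : C) : C :=
  S.sum (fun m n => if m = 0 ∧ n = 1 then x else 0)

lemma STshiftS {C : Type} [AddCommGroup C] (S : STPowerSummation C) (x : ℕ → ℕ → C) :
    S.sum (fun m n => S.sOp (x m n)) =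
    S.sum (fun m n => if 1 ≤ m then x (m-1) n else 0) := by
  have h := S.assoc (fun i j k l => if k = 1 ∧ l = 0 then x i j else 0)
  refine h.trans ?_
  congr 1; funext m n
  have inner : ∀ i, (∑ j ∈ Finset.range (n+1),
      if m - i = 1 ∧ n - j = 0 then x i j else 0) = if m - i = 1 then x i n else 0 := by
    intro i
    rw [Finset.sum_eq_single n (fun j hj hne => by
        simp only [Finset.mem_range] at hj
        exact if_neg (by omega))
      (fun h => absurd (Finset.self_mem_range_succ n) h)]
    simp
  rw [Finset.sum_congr rfl (fun i _ => inner i)]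
  match m with
  | 0 => simp
  | k+1 =>
    rw [Finset.sum_eq_single k (fun i hi hne => by
        simp only [Finset.mem_range] at hi
        exact if_neg (by omega))
      (fun h => absurd (Finset.mem_range.mpr (by omega)) h)]
    simp

lemma STshiftT {C : Type} [AddCommGroup C] (S : STPowerSummation C) (y : ℕ → ℕ → C) :
    S.sum (fun m n => S.tOp (y m n)) =
    S.sum (fun m n => if 1 ≤ n then y m (n-1) else 0) := by
  have h := S.assoc (fun i j k l => if k = 0 ∧ l = 1 then y i j else 0)
  refine h.trans ?_
  congr 1; funext m n
  have inner : ∀ i, (∑ j ∈ Finset.range (n+1),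
      if m - i = 0 ∧ n - j = 1 then y i j else 0) =
      if m - i = 0 ∧ 1 ≤ n then y i (n-1) else 0 := by
    intro i
    match n with
    | 0 => simp
    | k+1 =>
      rw [Finset.sum_eq_single k (fun j hj hne => by
          simp only [Finset.mem_range] at hj
          exact if_neg (by omega))
        (fun h => absurd (Finset.mem_range.mpr (by omega)) h)]
      simp
  rw [Finset.sum_congr rfl (fun i _ => inner i)]
  rw [Finset.sum_eq_single m (fun i hi hne => by
      simp only [Finset.mem_range] at hi
      exact if_neg (by omega))
    (fun h => absurd (Finset.self_mem_range_succ m) h)]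
  simp

noncomputable def STaux {C : Type} [AddCommGroup C] (xf yf : C → C) (d : C) : ℕ → ℕ → C
  | 0, 0 => d
  | 0, n+1 => yf (STaux xf yf d 0 n)
  | m+1, 0 => xf (STaux xf yf d m 0)
  | m+1, n+1 => xf (STaux xf yf d m (n+1)) + yf (STaux xf yf d (m+1) n)

lemma STaux_eq1 {C : Type} [AddCommGroup C] (xf yf : C → C) (d : C) :
    STaux xf yf d 0 0 = d := by rw [STaux]

lemma STaux_eq2 {C : Type} [AddCommGroup C] (xf yf : C → C) (d : C) (n : ℕ) :
    STaux xf yf d 0 (n+1) = yf (STaux xf yf d 0 n) := by rw [STaux]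

lemma STaux_eq3 {C : Type} [AddCommGroup C] (xf yf : C → C) (d : C) (m : ℕ) :
    STaux xf yf d (m+1) 0 = xf (STaux xf yf d m 0) := by rw [STaux]

lemma STaux_eq4 {C : Type} [AddCommGroup C] (xf yf : C → C) (d : C) (m n : ℕ) :
    STaux xf yf d (m+1) (n+1) = xf (STaux xf yf d m (n+1)) + yf (STaux xf yf d (m+1) n) := by
  rw [STaux]

/-- contramodule Nakayama lemma. Let `C` be an abelian group endowed with
an `[s,t]`-power infinite summation operation and `D ⊆ C` a subgroup with `sD + tD = D`.
Then `D = 0`. -/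
theorem stPowerSummation_nakayama
    (C : Type) [AddCommGroup C] (S : STPowerSummation C) (D : AddSubgroup C)
    (hD : ∀ d : C, d ∈ D ↔ ∃ x ∈ D, ∃ y ∈ D, d = S.sOp x + S.tOp y) :
    D = ⊥ := by
  have hchoice : ∀ c : C, ∃ x y : C, c ∈ D → x ∈ D ∧ y ∈ D ∧ c = S.sOp x + S.tOp y := by
    intro c
    by_cases h : c ∈ D
    · obtain ⟨x, hx, y, hy, hxy⟩ := (hD c).mp h
      exact ⟨x, y, fun _ => ⟨hx, hy, hxy⟩⟩
    · exact ⟨0, 0, fun h' => absurd h' h⟩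
  choose xf yf hf using hchoice
  ext d
  simp only [AddSubgroup.mem_bot]
  constructor
  · intro hd
    set a := STaux xf yf d with ha
    have memD : ∀ k m n, m + n = k → a m n ∈ D := by
      intro k
      induction k with
      | zero =>
        intro m n h
        obtain ⟨rfl, rfl⟩ : m = 0 ∧ n = 0 := by omega
        rw [ha, STaux_eq1]; exact hd
      | succ k ih =>
        intro m n h
        match m, n with
        | 0, n+1 =>
          rw [show a 0 (n+1) = yf (a 0 n) from STaux_eq2 xf yf d n]
          exact (hf _ (ih 0 n (by omega))).2.1
        | m+1, 0 =>
          rw [show a (m+1) 0 = xf (a m 0) from STaux_eq3 xf yf d m]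
          exact (hf _ (ih m 0 (by omega))).1
        | m+1, n+1 =>
          rw [show a (m+1) (n+1) = xf (a m (n+1)) + yf (a (m+1) n) from STaux_eq4 xf yf d m n]
          exact D.add_mem (hf _ (ih m (n+1) (by omega))).1 (hf _ (ih (m+1) n (by omega))).2.1
    set X := fun m n => xf (a m n) with hX
    set Y := fun m n => yf (a m n) with hY
    have heq : ∀ m n, a m n = S.sOp (X m n) + S.tOp (Y m n) :=
      fun m n => (hf _ (memD (m+n) m n rfl)).2.2
    have hstruct : ∀ m n : ℕ, ¬(m = 0 ∧ n = 0) →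
        a m n = (if 1 ≤ m then X (m-1) n else 0) + (if 1 ≤ n then Y m (n-1) else 0) := by
      intro m n h
      match m, n with
      | 0, 0 => exact absurd ⟨rfl, rfl⟩ h
      | 0, n+1 => simp [hX, hY, show a 0 (n+1) = yf (a 0 n) from STaux_eq2 xf yf d n]
      | m+1, 0 => simp [hX, hY, show a (m+1) 0 = xf (a m 0) from STaux_eq3 xf yf d m]
      | m+1, n+1 =>
        simp [hX, hY, show a (m+1) (n+1) = xf (a m (n+1)) + yf (a (m+1) n) from STaux_eq4 xf yf d m n]
    have e1 : S.sum a = S.sum (fun m n => S.sOp (X m n)) + S.sum (fun m n => S.tOp (Y m n)) := by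
      rw [← S.add]
      congr 1
      funext m n
      exact heq m n
    have e2 : S.sum a = S.sum (fun m n =>
        (if 1 ≤ m then X (m-1) n else 0) + (if 1 ≤ n then Y m (n-1) else 0)) := by
      rw [e1, STshiftS, STshiftT, ← S.add]
    set b : ℕ → ℕ → C := fun m n => if m = 0 ∧ n = 0 then 0 else a m n with hb
    have e3 : S.sum a = S.sum b := by
      rw [e2]
      congr 1
      funext m n
      by_cases h : m = 0 ∧ n = 0
      · obtain ⟨rfl, rfl⟩ := h
        simp [hb]
      · rw [← hstruct m n h]
        simp [hb, h]
    have e5 : (fun m n => b m n + (if m = 0 ∧ n = 0 then d else 0)) = a := by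
      funext m n
      by_cases h : m = 0 ∧ n = 0
      · obtain ⟨rfl, rfl⟩ := h
        simp [hb, ha, STaux_eq1]
      · simp [hb, h]
    have e4 := S.add b (fun m n => if m = 0 ∧ n = 0 then d else 0)
    rw [e5] at e4
    have e6 : S.sum (fun m n => if m = 0 ∧ n = 0 then d else 0) = d := by
      simpa using S.unital _ (fun m n h => if_neg h)
    rw [e6, e3] at e4
    exact left_eq_add.mp e4
  · intro h
    rw [h]
    exact D.zero_mem
end

section
/- Let R be a commutative ring, s ∈ R, M an R-module with R[s⁻¹] ⊗_R M = 0 (M is s-torsion), and C any R-module. Then Hom_R(M, C) is an s-contramodule: Hom_R(R[s⁻¹], Hom_R(M,C)) = 0 = Ext¹_R(R[s⁻¹], Hom_R(M,C)). -/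
/-!
`Hom_R(R[s⁻¹], Hom_R(M, C)) ≃ Hom_R(R[s⁻¹] ⊗_R M, C)`, which vanishes with `R[s⁻¹] ⊗_R M`.

For `Ext¹`, present `R[s⁻¹] = colim (R →s R →s ⋯)` by the short exact sequence
`0 → R^(ℕ) → R^(ℕ) → R[s⁻¹] → 0`, `eₙ ↦ eₙ - s eₙ₊₁`, `eₙ ↦ s⁻ⁿ`: a projective resolution of
length one. Hence `Ext¹(R[s⁻¹], N) = 0` as soon as every sequence `(bₙ)` in `N` is of the form
`aₙ - s aₙ₊₁`. In `N = Hom_R(M, C)` with `M` `s`-torsion, `aₙ(m) = ∑ₖ bₙ₊ₖ(sᵏ m)` is a finite sum.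
-/

open CategoryTheory Opposite

universe u

namespace CategoryTheory.ShortComplex

open Limits ZeroObject

variable {C : Type*} [Category C] [Abelian C]

/-- `S.f : S.X₁ ⟶ S.X₂` as a chain complex concentrated in degrees `1` and `0`. -/
noncomputable def twoTermComplex (S : ShortComplex C) : ChainComplex C ℕ :=
  ChainComplex.of (fun | 0 => S.X₂ | 1 => S.X₁ | _ + 2 => 0) (fun | 0 => S.f | _ + 1 => 0)
    (fun | 0 => zero_comp | _ + 1 => zero_comp)

lemma twoTermComplex_d_one_zero (S : ShortComplex C) : S.twoTermComplex.d 1 0 = S.f := by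
  simp [twoTermComplex, ChainComplex.of.d]

lemma twoTermComplex_d_succ_succ (S : ShortComplex C) (n : ℕ) :
    S.twoTermComplex.d (n + 2) (n + 1) = 0 := by
  simp [twoTermComplex, ChainComplex.of.d]
  rfl

namespace ShortExact

variable {S : ShortComplex C}

lemma twoTermComplex_exactAt_succ (hS : S.ShortExact) (n : ℕ) :
    S.twoTermComplex.ExactAt (n + 1) := by
  rw [HomologicalComplex.exactAt_iff' _ (n + 2) (n + 1) n (by simp) (by simp)]
  match n with
  | 0 =>
    rw [exact_iff_mono _ (S.twoTermComplex_d_succ_succ 0)]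
    exact (S.twoTermComplex_d_one_zero ▸ hS.mono_f :)
  | _ + 1 => exact exact_of_isZero_X₂ _ (isZero_zero C)

noncomputable def projectiveResolution_s13 (hS : S.ShortExact) [Projective S.X₁] [Projective S.X₂] :
    ProjectiveResolution S.X₃ where
  complex := S.twoTermComplex
  projective
    | 0 => ‹Projective S.X₂›
    | 1 => ‹Projective S.X₁›
    | _ + 2 => Projective.zero_projective
  π := (ChainComplex.toSingle₀Equiv _ _).symm
    ⟨S.g, by simp only [twoTermComplex_d_one_zero]; exact S.zero⟩
  quasiIso := ⟨fun
    | 0 => by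
      rw [ChainComplex.quasiIsoAt₀_iff, quasiIso_iff_of_zeros' _ rfl rfl rfl]
      refine (exact_and_epi_g_iff_of_iso ?_).2 ⟨hS.exact, hS.epi_g⟩
      refine isoMk (Iso.refl _) (Iso.refl _) (Iso.refl _) ?_ ?_
      · exact (Category.id_comp _).trans
          (S.twoTermComplex_d_one_zero.symm.trans (Category.comp_id _).symm)
      · refine (Category.id_comp _).trans ((Category.comp_id _).trans ?_).symm
        exact ChainComplex.toSingle₀Equiv_symm_apply_f_zero _ _
    | n + 1 => by
      rw [quasiIsoAt_iff_exactAt' _ _ (ChainComplex.exactAt_succ_single_obj _ n)]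
      exact hS.twoTermComplex_exactAt_succ n⟩

lemma isZero_Ext_one_of_surjective_comp (hS : S.ShortExact) (R : Type*) [Ring R] [Linear R C]
    [EnoughProjectives C] [Projective S.X₁] [Projective S.X₂] (Y : C)
    (h : Function.Surjective (S.f ≫ · : (S.X₂ ⟶ Y) → (S.X₁ ⟶ Y))) :
    IsZero (((Ext R C 1).obj (Opposite.op S.X₃)).obj Y) := by
  refine IsZero.of_iso ?_ (hS.projectiveResolution_s13.isoExt 1 Y)
  rw [← HomologicalComplex.exactAt_iff_isZero_homology,
    HomologicalComplex.exactAt_iff' _ 0 1 2 (by simp) (by simp), moduleCat_exact_iff]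
  intro g _
  obtain ⟨g', hg'⟩ := h g
  exact ⟨g', (congrArg (· ≫ g') S.twoTermComplex_d_one_zero).trans hg'⟩

end ShortExact

end CategoryTheory.ShortComplex

namespace IsLocalization.Away.Telescope

open Finsupp Limits

variable {R : Type u} [CommRing R] (s : R) (A : Type u) [CommRing A] [Algebra R A]
  [IsLocalization.Away s A]

noncomputable def d : (ℕ →₀ R) →ₗ[R] (ℕ →₀ R) :=
  LinearMap.id - s • lmapDomain R R Nat.succ

noncomputable def π : (ℕ →₀ R) →ₗ[R] A :=
  linearCombination R (invSelf s ^ ·)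

variable {s A}

lemma d_single (n : ℕ) (r : R) : d s (single n r) = single n r - single (n + 1) (s * r) := by
  simp [d, mapDomain_single, smul_single]

lemma π_single (n : ℕ) (r : R) : π s A (single n r) = r • invSelf s ^ n :=
  linearCombination_single _ _ _

variable (s A)

lemma π_comp_d : π s A ∘ₗ d s = 0 := by
  refine lhom_ext' fun n => LinearMap.ext_ring ?_
  simp only [LinearMap.comp_apply, lsingle_apply, d_single, map_sub, π_single, pow_succ,
    mul_one, one_smul, LinearMap.zero_apply]
  rw [sub_eq_zero, Algebra.smul_def, mul_left_comm, mul_invSelf, mul_one]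

lemma d_injective : Function.Injective (d s) := by
  refine (injective_iff_map_eq_zero _).2 fun f hf => ?_
  have hf (n : ℕ) : f n = s * mapDomain Nat.succ f n := by
    simpa [d, sub_eq_zero] using congr($hf n)
  ext n
  induction n with
  | zero => simpa [mapDomain_of_notMem_range] using hf 0
  | succ n ih => simp [hf (n + 1), mapDomain_apply Nat.succ_injective, ih]

lemma π_surjective : Function.Surjective (π s A) := by
  intro z
  obtain ⟨n, a, h⟩ := surj s z
  refine ⟨single n a, ?_⟩
  rw [π_single, Algebra.smul_def, ← h, mul_assoc, ← mul_pow, mul_invSelf, one_pow, mul_one]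

lemma single_sub_single_mem_range_d (n k : ℕ) (r : R) :
    single n r - single (n + k) (s ^ k * r) ∈ LinearMap.range (d s) := by
  induction k with
  | zero => simp
  | succ k ih =>
    have step := add_mem ih (LinearMap.mem_range_self (d s) (single (n + k) (s ^ k * r)))
    rwa [d_single, sub_add_sub_cancel, ← mul_assoc, ← pow_succ', add_assoc] at step

lemma exists_sub_single_mem_range_d (f : ℕ →₀ R) :
    ∃ n r, f - single n r ∈ LinearMap.range (d s) := by
  induction f using Finsupp.induction with
  | zero => exact ⟨0, 0, by simp⟩
  | single_add a b f _ _ ih =>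
    obtain ⟨N, c, hf⟩ := ih
    refine ⟨max a N, s ^ (max a N - a) * b + s ^ (max a N - N) * c, ?_⟩
    have ha := single_sub_single_mem_range_d s a (max a N - a) b
    have hN := single_sub_single_mem_range_d s N (max a N - N) c
    rw [Nat.add_sub_cancel' (le_max_left a N)] at ha
    rw [Nat.add_sub_cancel' (le_max_right a N)] at hN
    convert add_mem (add_mem hf ha) hN using 1
    rw [single_add]
    abel

lemma exact_d_π : Function.Exact (d s) (π s A) := by
  refine LinearMap.exact_iff.2
    (le_antisymm (fun f hf => ?_) (LinearMap.range_le_ker_iff.2 (π_comp_d s A)))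
  obtain ⟨n, r, hnr⟩ := exists_sub_single_mem_range_d s f
  have hπ : r • invSelf s ^ n = (0 : A) := by
    rw [← π_single, ← sub_sub_cancel f (single n r), map_sub, LinearMap.mem_ker.1 hf,
      LinearMap.range_le_ker_iff.2 (π_comp_d s A) hnr, sub_zero]
  have hr : algebraMap R A r = algebraMap R A 0 := calc
    algebraMap R A r = r • invSelf s ^ n * algebraMap R A s ^ n := by
      rw [Algebra.smul_def, mul_assoc, ← mul_pow, mul_comm (invSelf s), mul_invSelf, one_pow,
        mul_one]
    _ = algebraMap R A 0 := by rw [hπ, zero_mul, map_zero]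
  obtain ⟨m, hm⟩ := exists_of_eq s hr
  have hf := add_mem hnr (single_sub_single_mem_range_d s n m r)
  rwa [hm, mul_zero, single_zero, sub_zero, sub_add_cancel] at hf

noncomputable def shortComplex : ShortComplex (ModuleCat.{u} R) :=
  ModuleCat.shortComplexOfCompEqZero (d s) (π s A) (π_comp_d s A)

lemma shortComplex_shortExact : (shortComplex s A).ShortExact :=
  ModuleCat.shortComplex_shortExact _ (exact_d_π s A) (d_injective s) (π_surjective s A)

instance : Projective (shortComplex s A).X₁ := by dsimp [shortComplex]; infer_instance

instance : Projective (shortComplex s A).X₂ := by dsimp [shortComplex]; infer_instance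

variable {N : Type u} [AddCommGroup N] [Module R N]

lemma linearCombination_comp_d (a : ℕ → N) :
    linearCombination R a ∘ₗ d s = linearCombination R fun n => a n - s • a (n + 1) := by
  refine lhom_ext' fun n => LinearMap.ext_ring ?_
  simp [d_single]

theorem isZero_Ext_one_of_surjective
    (hN : Function.Surjective fun (a : ℕ → N) n => a n - s • a (n + 1)) :
    IsZero (((Ext R (ModuleCat.{u} R) 1).obj (op (ModuleCat.of R A))).obj (ModuleCat.of R N)) := by
  refine (shortComplex_shortExact s A).isZero_Ext_one_of_surjective_comp R _ fun g => ?_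
  obtain ⟨a, ha⟩ := hN fun n => g.hom (single n 1)
  refine ⟨ModuleCat.ofHom (linearCombination R a), ModuleCat.hom_ext ?_⟩
  refine (linearCombination_comp_d s a).trans (lhom_ext' fun n => LinearMap.ext_ring ?_)
  exact (linearCombination_single R 1 n).trans ((one_smul R _).trans (congrFun ha n))

end IsLocalization.Away.Telescope

section Torsion

open Finset

variable {R M C : Type*} [CommRing R] [AddCommGroup M] [Module R M] [AddCommGroup C] [Module R C]
  {s : R}

variable (s) in
lemma isTorsion'_powers_of_subsingleton_tensorProduct (A : Type*) [CommRing A]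
    [Algebra R A] [IsLocalization.Away s A] [Subsingleton (TensorProduct R A M)] :
    Module.IsTorsion' M (Submonoid.powers s) := fun m => by
  obtain ⟨r, hr, h⟩ := (IsLocalizedModule.subsingleton_iff (Submonoid.powers s)
    (TensorProduct.mk R A M 1)).1 ‹_› m
  exact ⟨⟨r, hr⟩, h⟩

lemma exists_common_pow_smul_eq_zero (hM : Module.IsTorsion' M (Submonoid.powers s))
    (m₁ m₂ : M) : ∃ K, s ^ K • m₁ = 0 ∧ s ^ K • m₂ = 0 := by
  obtain ⟨K₁, h₁⟩ := (Submodule.isTorsion'_powers_iff s).1 hM m₁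
  obtain ⟨K₂, h₂⟩ := (Submodule.isTorsion'_powers_iff s).1 hM m₂
  exact ⟨K₁ + K₂, by rw [pow_add, mul_comm, mul_smul, h₁, smul_zero],
    by rw [pow_add, mul_smul, h₂, smul_zero]⟩

lemma finsum_pow_smul_eq_sum_range (b : ℕ → M →ₗ[R] C) {m : M} {K : ℕ} (hK : s ^ K • m = 0) :
    ∑ᶠ k, b k (s ^ k • m) = ∑ k ∈ range K, b k (s ^ k • m) := by
  refine finsum_eq_sum_of_support_subset _ fun k hk => ?_
  by_contra hkK
  obtain ⟨j, rfl⟩ := Nat.exists_eq_add_of_le (not_lt.1 (mem_range.not.1 hkK))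
  exact hk (show b _ (s ^ (K + j) • m) = 0 by
    rw [add_comm, pow_add, mul_smul, hK, smul_zero, map_zero])

variable (s) in
noncomputable def torsionTelescopeSum (hM : Module.IsTorsion' M (Submonoid.powers s))
    (b : ℕ → M →ₗ[R] C) : M →ₗ[R] C where
  toFun m := ∑ᶠ k, b k (s ^ k • m)
  map_add' m₁ m₂ := by
    obtain ⟨K, h₁, h₂⟩ := exists_common_pow_smul_eq_zero hM m₁ m₂
    rw [finsum_pow_smul_eq_sum_range b h₁, finsum_pow_smul_eq_sum_range b h₂,
      finsum_pow_smul_eq_sum_range b (by rw [smul_add, h₁, h₂, add_zero] : s ^ K • (m₁ + m₂) = 0),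
      ← sum_add_distrib]
    simp only [smul_add, map_add]
  map_smul' r m := by
    obtain ⟨K, h, -⟩ := exists_common_pow_smul_eq_zero hM m m
    rw [finsum_pow_smul_eq_sum_range b h,
      finsum_pow_smul_eq_sum_range b (by rw [smul_comm (s ^ K), h, smul_zero] : s ^ K • r • m = 0),
      RingHom.id_apply, Finset.smul_sum]
    simp only [smul_comm _ r, map_smul]

lemma torsionTelescopeSum_apply (hM : Module.IsTorsion' M (Submonoid.powers s))
    (b : ℕ → M →ₗ[R] C) (m : M) : torsionTelescopeSum s hM b m = ∑ᶠ k, b k (s ^ k • m) :=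
  rfl

lemma surjective_sub_smul_shift_of_isTorsion' (hM : Module.IsTorsion' M (Submonoid.powers s)) :
    Function.Surjective fun (a : ℕ → M →ₗ[R] C) n => a n - s • a (n + 1) := by
  intro b
  refine ⟨fun n => torsionTelescopeSum s hM (fun k => b (n + k)),
    funext fun n => LinearMap.ext fun m => ?_⟩
  obtain ⟨K, h, -⟩ := exists_common_pow_smul_eq_zero hM m m
  have h' : s ^ (K + 1) • m = 0 := by rw [pow_succ', mul_smul, h, smul_zero]
  have hs : s ^ K • s • m = 0 := by rw [← mul_smul, mul_comm, mul_smul, h, smul_zero]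
  rw [LinearMap.sub_apply, LinearMap.smul_apply, ← map_smul, torsionTelescopeSum_apply,
    torsionTelescopeSum_apply, finsum_pow_smul_eq_sum_range _ h',
    finsum_pow_smul_eq_sum_range _ hs, sum_range_succ']
  simp [pow_succ, mul_smul, add_assoc, add_comm 1]

end Torsion

/-- Let `R` be a commutative ring, `s ∈ R`, `M` an `s`-torsion `R`-module
(`R[s⁻¹] ⊗_R M = 0`) and `C` any `R`-module. Then `Hom_R(M, C)` is an `s`-contramodule:
`Hom_R(R[s⁻¹], Hom_R(M,C)) = 0 = Ext¹_R(R[s⁻¹], Hom_R(M,C))`. -/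
theorem hom_from_torsion_isContramodule
    (R : Type) [CommRing R] (s : R) (M C : Type) [AddCommGroup M] [Module R M]
    [AddCommGroup C] [Module R C]
    (hM : Subsingleton (TensorProduct R (Localization.Away s) M)) :
    Subsingleton (Localization.Away s →ₗ[R] (M →ₗ[R] C)) ∧
      Subsingleton (((Ext R (ModuleCat R) 1).obj
        (op (ModuleCat.of R (Localization.Away s)))).obj
        (ModuleCat.of R (M →ₗ[R] C))) := by
  have htor := isTorsion'_powers_of_subsingleton_tensorProduct (M := M) s (Localization.Away s)
  refine ⟨(TensorProduct.lift.equiv (RingHom.id R) _ M C).toEquiv.subsingleton,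
    ModuleCat.subsingleton_of_isZero ?_⟩
  exact IsLocalization.Away.Telescope.isZero_Ext_one_of_surjective s _
    (surjective_sub_smul_shift_of_isTorsion' htor)
end

section
/- Let R be a commutative ring, s ∈ R, M an arbitrary R-module, and C an s-contramodule R-module. Then Hom_R(M, C) is an s-contramodule. -/
/-!
`R[s⁻¹]` has the free resolution `0 → R^(ℕ) → R^(ℕ) → R[s⁻¹] → 0` given by
`eₙ ↦ eₙ - s eₙ₊₁` and `eₙ ↦ s⁻ⁿ`. Hence `Hom_R(R[s⁻¹], N)` and `Ext¹_R(R[s⁻¹], N)` are the kernel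
and the cokernel of precomposition with the differential on `Hom_R(R^(ℕ), N)`, so `N` is an
`s`-contramodule iff that map is bijective. For `N = Hom_R(M, C)` the map becomes, after swapping
arguments, postcomposition with the corresponding map for `C`, hence is bijective along with it.
-/

open CategoryTheory Opposite

universe u

namespace LinearMap

variable {R : Type*} [CommRing R] {P₁ P₀ L : Type*} (N : Type*)
  [AddCommGroup P₁] [AddCommGroup P₀] [AddCommGroup L] [AddCommGroup N]
  [Module R P₁] [Module R P₀] [Module R L] [Module R N]

lemma subsingleton_iff_injective_lcomp {d : P₁ →ₗ[R] P₀} {π : P₀ →ₗ[R] L}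
    (exact : Function.Exact d π) (surj : Function.Surjective π) :
    Subsingleton (L →ₗ[R] N) ↔ Function.Injective (lcomp R N d) := by
  have hexact := exact_lcomp_of_exact_of_surjective N exact surj
  have hinj := lcomp_injective_of_surjective (S := R) (N := N) π surj
  rw [injective_iff_map_eq_zero]
  constructor
  · intro _ f hf
    obtain ⟨g, rfl⟩ := (hexact f).1 hf
    rw [Subsingleton.elim g 0, map_zero]
  · intro h
    exact ⟨fun g g' => hinj <| (h _ (hexact.apply_apply_eq_zero g)).trans
      (h _ (hexact.apply_apply_eq_zero g')).symm⟩

lemma bijective_lcomp_linearMap (M : Type*) {C : Type*} [AddCommGroup M] [AddCommGroup C]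
    [Module R M] [Module R C] {d : P₁ →ₗ[R] P₀} (h : Function.Bijective (lcomp R C d)) :
    Function.Bijective (lcomp R (M →ₗ[R] C) d) :=
  (lflip.trans ((LinearEquiv.ofBijective _ h).congrRight.trans lflip)).bijective

end LinearMap

namespace ModuleCat

variable {R : Type u} [CommRing R] {P₁ P₀ L : Type u}
  [AddCommGroup P₁] [AddCommGroup P₀] [AddCommGroup L]
  [Module R P₁] [Module R P₀] [Module R L]

def twoTermComplex (d : P₁ →ₗ[R] P₀) : ChainComplex (ModuleCat.{u} R) ℕ :=
  ChainComplex.of (fun | 0 => of R P₀ | 1 => of R P₁ | _ + 2 => of R PUnit)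
    (fun | 0 => ofHom d | _ + 1 => 0) (by rintro (_ | _) <;> exact Limits.zero_comp)

lemma twoTermComplex_d_one_zero (d : P₁ →ₗ[R] P₀) :
    (twoTermComplex d).d 1 0 = ofHom d := by
  simp [twoTermComplex, ChainComplex.of.d]

variable [Module.Projective R P₀] [Module.Projective R P₁]

noncomputable def projectiveResolutionOfExact {d : P₁ →ₗ[R] P₀} {π : P₀ →ₗ[R] L}
    (inj : Function.Injective d) (exact : Function.Exact d π) (surj : Function.Surjective π) :
    ProjectiveResolution (of R L) where
  complex := twoTermComplex d
  projective
    | 0 => inferInstanceAs (Projective (of R P₀))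
    | 1 => inferInstanceAs (Projective (of R P₁))
    | _ + 2 => (isZero_of_subsingleton (of R PUnit)).projective
  π := (ChainComplex.toSingle₀Equiv _ _).symm ⟨ofHom π, by
    rw [twoTermComplex_d_one_zero]
    exact congrArg ofHom exact.linearMap_comp_eq_zero⟩
  quasiIso := ⟨fun
    | 0 => by
      rw [ChainComplex.quasiIsoAt₀_iff, ShortComplex.quasiIso_iff_of_zeros' _ rfl rfl rfl]
      refine ⟨?_, ?_⟩
      · rw [ShortComplex.moduleCat_exact_iff]
        intro x hx
        obtain ⟨y, rfl⟩ := (exact x).1 hx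
        exact ⟨y, rfl⟩
      · exact (epi_iff_surjective (ofHom π)).2 surj
    | 1 => by
      rw [quasiIsoAt_iff_exactAt' _ _ (ChainComplex.exactAt_succ_single_obj _ _),
        HomologicalComplex.exactAt_iff' _ 2 1 0 (by simp) (by simp),
        ShortComplex.moduleCat_exact_iff]
      intro x hx
      change d x = 0 at hx
      exact ⟨0, (map_zero _).trans (inj (hx.trans d.map_zero.symm)).symm⟩
    | n + 2 => by
      rw [quasiIsoAt_iff_exactAt' _ _ (ChainComplex.exactAt_succ_single_obj _ _),
        HomologicalComplex.exactAt_iff' _ (n + 3) (n + 2) (n + 1) (by simp) (by simp)]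
      exact ShortComplex.exact_of_isZero_X₂ _ (isZero_of_subsingleton (of R PUnit))⟩

lemma subsingleton_ext_one_iff_surjective_lcomp (N : Type u) [AddCommGroup N] [Module R N]
    {d : P₁ →ₗ[R] P₀} {π : P₀ →ₗ[R] L}
    (inj : Function.Injective d) (exact : Function.Exact d π) (surj : Function.Surjective π) :
    Subsingleton (((Ext R (ModuleCat R) 1).obj (op (of R L))).obj (of R N)) ↔
      Function.Surjective (LinearMap.lcomp R N d) := by
  rw [← isZero_iff_subsingleton,
    ((projectiveResolutionOfExact inj exact surj).isoExt 1 (of R N)).isZero_iff,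
    ← HomologicalComplex.exactAt_iff_isZero_homology,
    HomologicalComplex.exactAt_iff' _ 0 1 2 (by simp) (by simp), ShortComplex.moduleCat_exact_iff]
  constructor
  · intro h g
    obtain ⟨f, hf⟩ := h (ofHom g : of R P₁ ⟶ of R N)
      ((isZero_of_subsingleton (of R PUnit)).eq_of_src _ _)
    exact ⟨f.hom, congrArg Hom.hom hf⟩
  · intro h g _
    obtain ⟨f, hf⟩ := h g.hom
    exact ⟨ofHom f, congrArg ofHom hf⟩

lemma subsingleton_linearMap_and_ext_one_iff_bijective_lcomp (N : Type u) [AddCommGroup N]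
    [Module R N] {d : P₁ →ₗ[R] P₀} {π : P₀ →ₗ[R] L}
    (inj : Function.Injective d) (exact : Function.Exact d π) (surj : Function.Surjective π) :
    Subsingleton (L →ₗ[R] N) ∧
        Subsingleton (((Ext R (ModuleCat R) 1).obj (op (of R L))).obj (of R N)) ↔
      Function.Bijective (LinearMap.lcomp R N d) := by
  rw [LinearMap.subsingleton_iff_injective_lcomp N exact surj,
    subsingleton_ext_one_iff_surjective_lcomp N inj exact surj]
  rfl

end ModuleCat

namespace Localization.Away

variable {R : Type*} [CommRing R] (s : R)

noncomputable def invPow (n : ℕ) : Away s := mk 1 ⟨s ^ n, n, rfl⟩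

lemma smul_invPow_succ (n : ℕ) : s • invPow s (n + 1) = invPow s n := by
  rw [invPow, invPow, smul_mk, mk_eq_mk_iff]
  apply r_of_eq
  simp [pow_succ, mul_comm]

lemma mk_eq_smul_invPow (r : R) (n : ℕ) : (mk r ⟨s ^ n, n, rfl⟩ : Away s) = r • invPow s n := by
  rw [invPow, smul_mk, smul_eq_mul, mul_one]

lemma exists_pow_mul_eq_zero_of_smul_invPow_eq_zero {r : R} {n : ℕ} (h : r • invPow s n = 0) :
    ∃ k, s ^ k * r = 0 := by
  rw [← mk_eq_smul_invPow, mk_eq_mk'_apply, IsLocalization.mk'_eq_zero_iff] at h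
  obtain ⟨⟨_, k, rfl⟩, hk⟩ := h
  exact ⟨k, hk⟩

noncomputable def telescopeDiff : (ℕ →₀ R) →ₗ[R] (ℕ →₀ R) :=
  LinearMap.id - s • Finsupp.lmapDomain R R Nat.succ

noncomputable def telescopeAug : (ℕ →₀ R) →ₗ[R] Away s :=
  Finsupp.lsum ℕ fun n => LinearMap.toSpanSingleton R _ (invPow s n)

lemma telescopeDiff_apply_zero (x : ℕ →₀ R) : telescopeDiff s x 0 = x 0 := by
  simp [telescopeDiff, Finsupp.mapDomain_of_notMem_range]

lemma telescopeDiff_apply_succ (x : ℕ →₀ R) (n : ℕ) :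
    telescopeDiff s x (n + 1) = x (n + 1) - s * x n := by
  simp [telescopeDiff, Finsupp.mapDomain_apply Nat.succ_injective]

lemma telescopeDiff_single (n : ℕ) (r : R) :
    telescopeDiff s (Finsupp.single n r) =
      Finsupp.single n r - Finsupp.single (n + 1) (s * r) := by
  simp [telescopeDiff]

lemma telescopeAug_single (n : ℕ) (r : R) :
    telescopeAug s (Finsupp.single n r) = r • invPow s n := by
  simp [telescopeAug]

lemma telescopeAug_comp_telescopeDiff : telescopeAug s ∘ₗ telescopeDiff s = 0 := by
  ext n
  simp [telescopeDiff_single, telescopeAug_single, smul_invPow_succ]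

lemma telescopeDiff_injective : Function.Injective (telescopeDiff s) := by
  rw [injective_iff_map_eq_zero]
  intro x hx
  ext n
  induction n with
  | zero => simpa [telescopeDiff_apply_zero] using DFunLike.congr_fun hx 0
  | succ n ih =>
    simpa [telescopeDiff_apply_succ, ih, sub_eq_zero] using DFunLike.congr_fun hx (n + 1)

lemma telescopeAug_surjective : Function.Surjective (telescopeAug s) := by
  intro z
  induction z using Localization.induction_on with
  | H p =>
    obtain ⟨r, _, n, rfl⟩ := p
    exact ⟨Finsupp.single n r, by rw [telescopeAug_single, mk_eq_smul_invPow]⟩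

lemma single_sModEq_single_pow_mul (n k : ℕ) (r : R) :
    Finsupp.single n r ≡ Finsupp.single (n + k) (s ^ k * r)
      [SMOD LinearMap.range (telescopeDiff s)] := by
  induction k with
  | zero => simp
  | succ k ih =>
    refine ih.trans (SModEq.sub_mem.2 ⟨Finsupp.single (n + k) (s ^ k * r), ?_⟩)
    rw [telescopeDiff_single, pow_succ, mul_comm _ s, mul_assoc, add_assoc]

lemma exists_sModEq_single (x : ℕ →₀ R) :
    ∃ N c, x ≡ Finsupp.single N c [SMOD LinearMap.range (telescopeDiff s)] := by
  induction x using Finsupp.induction_linear with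
  | zero => exact ⟨0, 0, by rw [Finsupp.single_zero]⟩
  | add x y hx hy =>
    obtain ⟨N, c, hx⟩ := hx
    obtain ⟨N', c', hy⟩ := hy
    refine ⟨N + N', s ^ N' * c + s ^ N * c', ?_⟩
    rw [Finsupp.single_add]
    refine (hx.trans (single_sModEq_single_pow_mul s N N' c)).add ?_
    rw [add_comm N]
    exact hy.trans (single_sModEq_single_pow_mul s N' N c')
  | single n r => exact ⟨n, r, SModEq.rfl⟩

lemma exact_telescopeDiff_telescopeAug : Function.Exact (telescopeDiff s) (telescopeAug s) := by
  have hle : LinearMap.range (telescopeDiff s) ≤ LinearMap.ker (telescopeAug s) :=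
    LinearMap.range_le_ker_iff.2 (telescopeAug_comp_telescopeDiff s)
  refine fun x => ⟨fun hx => ?_, fun ⟨y, hy⟩ => hle ⟨y, hy⟩⟩
  obtain ⟨N, c, hxc⟩ := exists_sModEq_single s x
  have hc : c • invPow s N = 0 := by
    rw [← telescopeAug_single, ← hx, eq_comm, ← sub_eq_zero, ← map_sub]
    exact hle (SModEq.sub_mem.1 hxc)
  obtain ⟨k, hk⟩ := exists_pow_mul_eq_zero_of_smul_invPow_eq_zero s hc
  have := hxc.trans (single_sModEq_single_pow_mul s N k c)
  rw [hk, Finsupp.single_zero] at this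
  exact SModEq.zero.1 this

end Localization.Away

open Localization.Away

/-- Let `R` be a commutative ring, `s ∈ R`, `M` an arbitrary `R`-module
and `C` an `s`-contramodule `R`-module. Then `Hom_R(M, C)` is an `s`-contramodule. -/
theorem hom_into_contramodule_isContramodule
    (R : Type) [CommRing R] (s : R) (M C : Type) [AddCommGroup M] [Module R M]
    [AddCommGroup C] [Module R C]
    (hC : Subsingleton (Localization.Away s →ₗ[R] C) ∧
      Subsingleton (((Ext R (ModuleCat R) 1).obj
        (op (ModuleCat.of R (Localization.Away s)))).obj (ModuleCat.of R C))) :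
    Subsingleton (Localization.Away s →ₗ[R] (M →ₗ[R] C)) ∧
      Subsingleton (((Ext R (ModuleCat R) 1).obj
        (op (ModuleCat.of R (Localization.Away s)))).obj
        (ModuleCat.of R (M →ₗ[R] C))) := by
  have isContramodule_iff (N : Type) [AddCommGroup N] [Module R N] :=
    ModuleCat.subsingleton_linearMap_and_ext_one_iff_bijective_lcomp N
      (telescopeDiff_injective s) (exact_telescopeDiff_telescopeAug s) (telescopeAug_surjective s)
  rw [isContramodule_iff] at hC ⊢
  exact LinearMap.bijective_lcomp_linearMap M hC
end

section
/- Let A be an associative ring and J ⊂ A a two-sided ideal with Jⁿ = 0 for some n ≥ 1. Let P be a flat left A-module such that P/JP is a projective left (A/J)-module. Then P is a projective A-module. Moreover, if P/JP is free over A/J, then P is free over A. -/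
/-!
Write `J = ker π`. If `P/JP` is free, lift a basis to `f : A^(I) → P`. Then `P = im f + JP`, and
Nakayama's lemma for the nilpotent ideal `J` (which needs no finiteness) makes `f` surjective.
Flatness of `P` turns a relation `∑ aᵢ • f(mᵢ) = 0` with `aᵢ ∈ J` into one among elements of
`ker f`, so `ker f ⊆ J · ker f` and `f` is injective. If `P/JP` is only projective, the Eilenberg
swindle makes `P/JP ⊕ B^(σ)` free, and the free case applied to the flat module `P ⊕ A^(σ)`
exhibits `P` as a direct summand of a free module.
-/

/-- Flatness of a left module over an associative ring, expressed by the equational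
criterion: every finite relation `∑ aᵢ • xᵢ = 0` comes from relations in the ring, i.e.
there are `yⱼ ∈ P` and `bᵢⱼ ∈ A` with `xᵢ = ∑ⱼ bᵢⱼ • yⱼ` and `∑ᵢ aᵢ * bᵢⱼ = 0`. -/
def IsFlatLeftModule (A : Type) [Ring A] (P : Type) [AddCommGroup P] [Module A P] : Prop :=
  ∀ (n : ℕ) (a : Fin n → A) (x : Fin n → P), (∑ i, a i • x i) = 0 →
    ∃ (m : ℕ) (b : Fin n → Fin m → A) (y : Fin m → P),
      (∀ i, x i = ∑ j, b i j • y j) ∧ ∀ j, (∑ i, a i * b i j) = 0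


open Submodule

section Nakayama

variable {A M : Type*} [Ring A] [AddCommGroup M] [Module A M]

theorem Ideal.pow_eq_bot_of_list_prod_eq_zero {J : Ideal A} {n : ℕ}
    (h : ∀ l : List A, l.length = n → (∀ x ∈ l, x ∈ J) → l.prod = 0) : J ^ n = ⊥ := by
  suffices key : ∀ m, ∀ y ∈ J ^ m, ∀ l : List A, m + l.length = n → (∀ x ∈ l, x ∈ J) →
      y * l.prod = 0 by
    rw [eq_bot_iff]
    intro y hy
    simpa using key n y hy [] (by simp) (by simp)
  intro m
  induction m with
  | zero =>
    intro y _ l hl hlJ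
    rw [h l (by omega) hlJ, mul_zero]
  | succ m ih =>
    intro y hy l hl hlJ
    rw [Submodule.pow_succ] at hy
    refine Submodule.mul_induction_on hy (fun b hb a ha => ?_) (fun x z hx hz => ?_)
    · rw [mul_assoc, ← List.prod_cons]
      refine ih b hb (a :: l) (by simp; omega) (fun x hx => ?_)
      rcases List.mem_cons.mp hx with rfl | hx
      exacts [ha, hlJ x hx]
    · rw [add_mul, hx, hz, add_zero]

theorem Submodule.le_of_le_sup_smul_of_isNilpotent {J : Ideal A} (hJ : IsNilpotent J)
    {S W : Submodule A M} (h : W ≤ S ⊔ J • W) : W ≤ S := by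
  have key : ∀ k : ℕ, W ≤ S ⊔ J ^ k • W := by
    intro k
    induction k with
    | zero => simp [Submodule.pow_zero, Ideal.one_eq_top]
    | succ k ih =>
      calc W ≤ S ⊔ J ^ k • (S ⊔ J • W) := ih.trans (sup_le_sup_left (smul_mono_right _ h) _)
        _ = S ⊔ J ^ k • S ⊔ J ^ (k + 1) • W := by
          rw [smul_sup, Submodule.pow_succ, Submodule.mul_smul, sup_assoc]
        _ ≤ S ⊔ J ^ (k + 1) • W := sup_le_sup_right (sup_le le_rfl smul_le_right) _
  obtain ⟨n, hn⟩ := hJ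
  simpa [hn, Submodule.zero_eq_bot] using key n

end Nakayama

section Flat

variable {A : Type} [Ring A]

theorem isFlatLeftModule_iff_fintype {P : Type} [AddCommGroup P] [Module A P] :
    IsFlatLeftModule A P ↔ ∀ (κ : Type) [Fintype κ] (a : κ → A) (x : κ → P),
      ∑ i, a i • x i = 0 → ∃ (ι : Type) (_ : Fintype ι) (b : κ → ι → A) (y : ι → P),
        (∀ i, x i = ∑ j, b i j • y j) ∧ ∀ j, ∑ i, a i * b i j = 0 := by
  constructor
  · intro hP κ _ a x hax
    let e := Fintype.equivFin κ
    obtain ⟨m, b, y, hxy, hab⟩ := hP _ (a ∘ e.symm) (x ∘ e.symm) (by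
      simpa [Function.comp_def] using (e.symm.sum_comp fun i => a i • x i).trans hax)
    refine ⟨Fin m, inferInstance, fun i => b (e i), y, fun i => by simpa using hxy (e i),
      fun j => ?_⟩
    rw [← hab j, ← e.symm.sum_comp]
    simp
  · intro hP n a x hax
    obtain ⟨ι, _, b, y, hxy, hab⟩ := hP _ a x hax
    let e := Fintype.equivFin ι
    refine ⟨_, fun i k => b i (e.symm k), y ∘ e.symm, fun i => ?_, fun k => hab _⟩
    rw [hxy i, ← e.symm.sum_comp]
    rfl

theorem isFlatLeftModule_finsupp (σ : Type) : IsFlatLeftModule A (σ →₀ A) := by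
  classical
  refine isFlatLeftModule_iff_fintype.mpr fun κ _ a x hax => ?_
  let S := Finset.univ.biUnion fun i => (x i).support
  refine ⟨S, inferInstance, fun i (s : S) => x i (s : σ), fun s => Finsupp.single (s : σ) 1,
    fun i => ?_, fun s => by simpa using DFunLike.congr_fun hax (s : σ)⟩
  have hS : (x i).support ⊆ S := Finset.subset_biUnion_of_mem (fun i => (x i).support) (by simp)
  simp_rw [Finsupp.smul_single_one]
  rw [Finset.sum_coe_sort S fun s => Finsupp.single s (x i s),
    ← (x i).sum_of_support_subset hS (fun s c => Finsupp.single s c) (by simp), Finsupp.sum_single]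

theorem IsFlatLeftModule.prod {P P' : Type} [AddCommGroup P] [Module A P] [AddCommGroup P']
    [Module A P'] (hP : IsFlatLeftModule A P) (hP' : IsFlatLeftModule A P') :
    IsFlatLeftModule A (P × P') := by
  refine isFlatLeftModule_iff_fintype.mpr fun κ _ a x hax => ?_
  obtain ⟨ι, _, b, y, hxy, hab⟩ := isFlatLeftModule_iff_fintype.mp hP κ a (fun i => (x i).1)
    (by simpa [Prod.fst_sum] using congrArg Prod.fst hax)
  obtain ⟨ι', _, b', y', hxy', hab'⟩ := isFlatLeftModule_iff_fintype.mp hP' κ a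
    (fun i => (x i).2) (by simpa [Prod.snd_sum] using congrArg Prod.snd hax)
  refine ⟨ι ⊕ ι', inferInstance, fun i => Sum.elim (b i) (b' i),
    Sum.elim (fun j => (y j, 0)) (fun j => (0, y' j)), fun i => ?_, ?_⟩
  · ext <;> simp [Fintype.sum_sum_type, Prod.fst_sum, Prod.snd_sum, ← hxy, ← hxy']
  · rintro (j | j)
    exacts [hab j, hab' j]

variable {M P : Type} [AddCommGroup M] [Module A M] [AddCommGroup P] [Module A P]

theorem IsFlatLeftModule.ker_inf_smul_top_le (hP : IsFlatLeftModule A P) (J : Ideal A)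
    [J.IsTwoSided] {f : M →ₗ[A] P} (hf : Function.Surjective f) :
    LinearMap.ker f ⊓ J • ⊤ ≤ J • LinearMap.ker f := by
  rintro x ⟨hfx, hxJ⟩
  rw [← Submodule.span_univ, ← Set.range_id] at hxJ
  obtain ⟨a, haJ, rfl⟩ := (mem_ideal_smul_span_iff_exists_sum J id _).mp hxJ
  have hx : (a.sum fun m c => c • id m) = ∑ m : a.support, a m • (m : M) := by
    simp [Finsupp.sum, Finset.sum_attach a.support fun m => a m • m]
  rw [hx] at hfx ⊢
  obtain ⟨ι, _, b, y, hy, hab⟩ := isFlatLeftModule_iff_fintype.mp hP a.support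
    (fun m => a m) (fun m => f m) (by simpa using hfx)
  choose w hw using fun j => hf (y j)
  -- `m - ∑ b m j • w j` lies in the kernel, and `a` annihilates the correction terms
  let k : a.support → M := fun m => m - ∑ j, b m j • w j
  have hk : ∀ m, k m ∈ LinearMap.ker f := fun m => by
    simp [k, hw, ← hy m]
  have hsum : ∑ m : a.support, a m • (m : M) = ∑ m : a.support, a m • k m := by
    simp only [k, smul_sub, Finset.sum_sub_distrib, Finset.smul_sum, smul_smul]
    rw [Finset.sum_comm (f := fun (m : a.support) j => (a m * b m j) • w j)]
    simp only [← Finset.sum_smul, hab, zero_smul, Finset.sum_const_zero, sub_zero]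
  rw [hsum]
  exact Submodule.sum_mem _ fun m _ => smul_mem_smul (haJ m) (hk m)

theorem IsFlatLeftModule.bijective_of_isNilpotent (hP : IsFlatLeftModule A P) {J : Ideal A}
    [J.IsTwoSided] (hJ : IsNilpotent J) (f : M →ₗ[A] P)
    (hrange : ⊤ ≤ LinearMap.range f ⊔ J • ⊤) (hker : LinearMap.ker f ≤ J • ⊤) :
    Function.Bijective f := by
  have hsurj : Function.Surjective f := LinearMap.range_eq_top.mp <|
    top_le_iff.mp (le_of_le_sup_smul_of_isNilpotent hJ hrange)
  refine ⟨LinearMap.ker_eq_bot.mp (eq_bot_iff.mpr (le_of_le_sup_smul_of_isNilpotent hJ ?_)), hsurj⟩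
  rw [bot_sup_eq]
  exact (le_inf le_rfl hker).trans (hP.ker_inf_smul_top_le J hsurj)

end Flat

section Swindle

variable {R : Type} [Ring R]

noncomputable def Finsupp.prodLEquivProdFinsupp (α M N : Type) [AddCommMonoid M] [AddCommMonoid N]
    [Module R M] [Module R N] : (α →₀ M × N) ≃ₗ[R] (α →₀ M) × (α →₀ N) :=
  LinearEquiv.ofLinearMap
    ((mapRange.linearMap (LinearMap.fst R M N)).prod (mapRange.linearMap (LinearMap.snd R M N)))
    ((mapRange.linearMap (LinearMap.inl R M N)).coprod (mapRange.linearMap (LinearMap.inr R M N)))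
    (by apply LinearMap.prod_ext <;> ext <;> simp)
    (by ext <;> simp)

noncomputable def Finsupp.natLEquivProd (M : Type) [AddCommMonoid M] [Module R M] :
    (ℕ →₀ M) ≃ₗ[R] M × (ℕ →₀ M) :=
  Finsupp.domLCongr Equiv.natEquivNatSumPUnit.{1} ≪≫ₗ sumFinsuppLEquivProdFinsupp R ≪≫ₗ
    (LinearEquiv.refl R _).prodCongr (uniqueLinearEquiv R M PUnit.unit) ≪≫ₗ
    LinearEquiv.prodComm R _ _

/-- The Eilenberg swindle: writing `Q ⊕ K ≅ F` with `F` free,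
`Q ⊕ F^(ℕ) ≅ Q ⊕ Q^(ℕ) ⊕ K^(ℕ) ≅ Q^(ℕ) ⊕ K^(ℕ) ≅ F^(ℕ)`. -/
theorem Module.Projective.exists_free_prod_finsupp (Q : Type) [AddCommGroup Q] [Module R Q]
    [Module.Projective R Q] : ∃ σ : Type, Module.Free R (Q × (σ →₀ R)) := by
  obtain ⟨s, hs⟩ := Module.projective_def'.mp ‹Module.Projective R Q›
  let t := Finsupp.linearCombination R (id : Q → Q)
  let K := LinearMap.ker t
  let e : (Q →₀ R) ≃ₗ[R] K × Q :=
    (Function.Exact.splitSurjectiveEquiv (M := K) (f := K.subtype)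
      (LinearMap.exact_subtype_ker_map t) K.injective_subtype ⟨s, hs⟩).1
  let G : (ℕ × Q →₀ R) ≃ₗ[R] (ℕ →₀ Q) × (ℕ →₀ K) :=
    Finsupp.curryLinearEquiv R ≪≫ₗ
      Finsupp.mapRange.linearEquiv (e ≪≫ₗ LinearEquiv.prodComm R K Q) ≪≫ₗ
      Finsupp.prodLEquivProdFinsupp ℕ Q K
  refine ⟨ℕ × Q, Module.Free.of_equiv (G ≪≫ₗ
    (Finsupp.natLEquivProd Q).prodCongr (LinearEquiv.refl R _) ≪≫ₗ
    LinearEquiv.prodAssoc R _ _ _ ≪≫ₗ (LinearEquiv.refl R Q).prodCongr G.symm)⟩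

end Swindle

section Reduction

variable {A B P Q : Type} [Ring A] [Ring B] {π : A →+* B} [AddCommGroup P] [Module A P]
  [AddCommGroup Q] [Module B Q]

theorem Finsupp.mem_smul_top_of_forall_mem {σ : Type} {J : Ideal A} {g : σ →₀ A}
    (hg : ∀ i, g i ∈ J) : g ∈ J • (⊤ : Submodule A (σ →₀ A)) :=
  g.sum_single ▸ Submodule.sum_mem _ fun i _ =>
    Finsupp.smul_single_one i (g i) ▸ smul_mem_smul (hg i) trivial

theorem Module.Free.of_isFlatLeftModule_of_semilinear (hπ : Function.Surjective π)
    (hJ : IsNilpotent (RingHom.ker π)) (hP : IsFlatLeftModule A P) (q : P →ₛₗ[π] Q)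
    (hq : Function.Surjective q) (hker : LinearMap.ker q ≤ RingHom.ker π • ⊤)
    [Module.Free B Q] : Module.Free A P := by
  classical
  let b := Module.Free.chooseBasis B Q
  choose p hp using fun i => hq (b i)
  let f := Finsupp.linearCombination A p
  have hqf : ∀ g, q (f g) = Finsupp.linearCombination B b (g.mapRange π (map_zero π)) := by
    intro g
    simp [f, Finsupp.linearCombination_apply, map_finsuppSum, Finsupp.sum_mapRange_index, hp]
  have hkerf : LinearMap.ker f ≤ RingHom.ker π • ⊤ := by
    intro g hg
    have hπg : g.mapRange π (map_zero π) = 0 := linearIndependent_iff.mp b.linearIndependent _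
      (by rw [← hqf, LinearMap.mem_ker.mp hg, map_zero])
    exact Finsupp.mem_smul_top_of_forall_mem fun i => by simpa using DFunLike.congr_fun hπg i
  have hrange : ⊤ ≤ LinearMap.range f ⊔ RingHom.ker π • ⊤ := by
    intro x _
    obtain ⟨g, hg⟩ := Finsupp.mapRange_surjective π (map_zero π) hπ (b.repr (q x))
    have hx : q (x - f g) = 0 := by rw [map_sub, hqf, hg, b.linearCombination_repr, sub_self]
    rw [← add_sub_cancel (f g) x]
    exact add_mem (mem_sup_left ⟨g, rfl⟩) (mem_sup_right (hker hx))
  exact Module.Free.of_equiv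
    (LinearEquiv.ofBijective f (hP.bijective_of_isNilpotent hJ f hrange hkerf))

theorem Submodule.prod_le_smul_top {P' : Type} [AddCommGroup P'] [Module A P'] {J : Ideal A}
    {W : Submodule A P} {W' : Submodule A P'} (hW : W ≤ J • ⊤) (hW' : W' ≤ J • ⊤) :
    W.prod W' ≤ J • ⊤ := by
  rintro ⟨x, x'⟩ ⟨hx, hx'⟩
  have hmap : ∀ {M : Type} [AddCommGroup M] [Module A M] (f : M →ₗ[A] P × P'),
      (J • ⊤ : Submodule A M).map f ≤ J • ⊤ := fun f =>
    (map_smul'' J ⊤ f).le.trans (smul_mono_right J le_top)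
  simpa using add_mem (hmap (LinearMap.inl A P P') (mem_map_of_mem (hW hx)))
    (hmap (LinearMap.inr A P P') (mem_map_of_mem (hW' hx')))

theorem exists_semilinear_prod_finsupp (hπ : Function.Surjective π) (q : P →ₛₗ[π] Q)
    (hq : Function.Surjective q) (hker : LinearMap.ker q ≤ RingHom.ker π • ⊤) (σ : Type) :
    ∃ q' : P × (σ →₀ A) →ₛₗ[π] Q × (σ →₀ B),
      Function.Surjective q' ∧ LinearMap.ker q' ≤ RingHom.ker π • ⊤ := by
  let r : (σ →₀ A) →ₛₗ[π] σ →₀ B := Finsupp.mapRange.linearMap π.toSemilinearMap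
  refine ⟨{ toFun := Prod.map q r, map_add' := by simp, map_smul' := by simp }, ?_, ?_⟩
  · exact hq.prodMap (Finsupp.mapRange_surjective π (map_zero π) hπ)
  · rintro ⟨x, g⟩ hxg
    simp only [LinearMap.mem_ker, LinearMap.coe_mk, AddHom.coe_mk, Prod.map_apply,
      Prod.mk_eq_zero] at hxg
    refine Submodule.prod_le_smul_top (W' := LinearMap.ker r) hker (fun g hg => ?_) ⟨hxg.1, hxg.2⟩
    exact Finsupp.mem_smul_top_of_forall_mem fun i => by
      simpa [r] using DFunLike.congr_fun hg i

end Reduction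

theorem projective_of_flat_of_projective_mod_nilpotent_ideal_general
    (A B : Type) [Ring A] [Ring B] (π : A →+* B) (hπ : Function.Surjective π)
    (n : ℕ)
    (hnil : ∀ l : List A, l.length = n → (∀ x ∈ l, π x = 0) → l.prod = 0)
    (P : Type) [AddCommGroup P] [Module A P] (hflat : IsFlatLeftModule A P)
    (N : Submodule A P)
    (hN : N = Submodule.span A { z : P | ∃ a : A, ∃ p : P, π a = 0 ∧ z = a • p })
    (Q : Type) [AddCommGroup Q] [Module B Q]
    (e : (P ⧸ N) ≃+ Q) (he : ∀ (a : A) (x : P ⧸ N), e (a • x) = π a • e x) :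
    (Module.Projective B Q → Module.Projective A P) ∧
      (Module.Free B Q → Module.Free A P) := by
  have hJ : IsNilpotent (RingHom.ker π) := ⟨n, Ideal.pow_eq_bot_of_list_prod_eq_zero
    fun l hl hlJ => hnil l hl fun x hx => RingHom.mem_ker.mp (hlJ x hx)⟩
  let q : P →ₛₗ[π] Q :=
    { toFun := fun x => e (N.mkQ x), map_add' := by simp, map_smul' := fun a x => he a (N.mkQ x) }
  have hq : Function.Surjective q := e.surjective.comp N.mkQ_surjective
  have hNJ : N ≤ RingHom.ker π • ⊤ := hN ▸ span_le.mpr fun _ ⟨a, p, ha, hz⟩ =>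
    hz ▸ smul_mem_smul (RingHom.mem_ker.mpr ha) trivial
  have hker : LinearMap.ker q ≤ RingHom.ker π • ⊤ := fun x hx => hNJ (by simpa [q] using hx)
  refine ⟨fun _ => ?_, fun _ => Module.Free.of_isFlatLeftModule_of_semilinear hπ hJ hflat q hq hker⟩
  obtain ⟨σ, _⟩ := Module.Projective.exists_free_prod_finsupp (R := B) Q
  obtain ⟨q', hq', hker'⟩ := exists_semilinear_prod_finsupp hπ q hq hker σ
  have : Module.Free A (P × (σ →₀ A)) := Module.Free.of_isFlatLeftModule_of_semilinear hπ hJ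
    (hflat.prod (isFlatLeftModule_finsupp σ)) q' hq' hker'
  exact Module.Projective.of_split (LinearMap.inl A P (σ →₀ A)) (LinearMap.fst A P _) rfl

/-- Let `A` be an associative ring and `J ⊆ A` a two-sided ideal with
`Jⁿ = 0` for some `n ≥ 1`; we realize `A/J` as the codomain `B` of a surjective ring
homomorphism `π : A →+* B` with kernel `J`, nilpotency being expressed by vanishing of all
length-`n` products of elements of `J`. Let `P` be a flat left `A`-module such that
`P/JP` is a projective left `A/J`-module (the `B`-module `Q`, identified with the quotient
`P ⧸ JP` by an additive isomorphism `e` compatible with the scalar actions via `π`). Then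
`P` is a projective `A`-module; moreover, if `P/JP` is free over `A/J`, then `P` is free
over `A`. -/
theorem projective_of_flat_of_projective_mod_nilpotent_ideal
    (A B : Type) [Ring A] [Ring B] (π : A →+* B) (hπ : Function.Surjective π)
    (n : ℕ) (hn : 1 ≤ n)
    (hnil : ∀ l : List A, l.length = n → (∀ x ∈ l, π x = 0) → l.prod = 0)
    (P : Type) [AddCommGroup P] [Module A P] (hflat : IsFlatLeftModule A P)
    (N : Submodule A P)
    (hN : N = Submodule.span A { z : P | ∃ a : A, ∃ p : P, π a = 0 ∧ z = a • p })
    (Q : Type) [AddCommGroup Q] [Module B Q]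
    (e : (P ⧸ N) ≃+ Q) (he : ∀ (a : A) (x : P ⧸ N), e (a • x) = π a • e x) :
    (Module.Projective B Q → Module.Projective A P) ∧
      (Module.Free B Q → Module.Free A P) :=
  projective_of_flat_of_projective_mod_nilpotent_ideal_general A B π hπ n hnil P hflat N hN Q e he
end

section
/- Let A be an associative ring, F a left A-module, and C₁ ← C₂ ← C₃ ← ⋯ a projective system of left A-modules such that the induced maps Hom_A(F, Cₙ₊₁) → Hom_A(F, Cₙ) are surjective and Ext¹_A(F, Cₙ) = 0 for all n ≥ 1. Then Ext¹_A(F, lim_{n} Cₙ) = 0. -/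
/-!
Compute `Ext¹(F, -)` with a projective resolution `⋯ → P₁ → P₀ → F`: it vanishes on `M`
iff every cocycle `P₁ → M` extends along `P₁ → P₀`. A cocycle into the limit has
components that extend to maps `ψₙ : P₀ → Cₙ`, but these need not be compatible. Their
defects vanish on `P₁`, so they factor through `F`, and surjectivity of
`Hom(F, Cₙ₊₁) → Hom(F, Cₙ)` lets one absorb them recursively by corrections
`P₀ → F → Cₙ`, which do not change the restrictions to `P₁`. The corrected maps are
compatible and assemble to an extension into the limit.
-/

open CategoryTheory Opposite Limits

theorem exists_seq_apply_succ_eq_sub_of_surjective {X : ℕ → Type*} [∀ n, AddGroup (X n)]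
    (g : ∀ n, X (n + 1) → X n) (hg : ∀ n, Function.Surjective (g n)) (h : ∀ n, X n) :
    ∃ k : ∀ n, X n, ∀ n, g n (k (n + 1)) = k n - h n := by
  let k : ∀ n, X n := fun n => Nat.rec 0 (fun n kn => Function.surjInv (hg n) (kn - h n)) n
  exact ⟨k, fun n => Function.surjInv_eq (hg n) _⟩

theorem CategoryTheory.ProjectiveResolution.subsingleton_ext_one_iff_s17 {R : Type*} [Ring R]
    {𝒞 : Type*} [Category 𝒞] [Abelian 𝒞] [Linear R 𝒞] [EnoughProjectives 𝒞] {X : 𝒞}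
    (P : ProjectiveResolution X) (Y : 𝒞) :
    Subsingleton (((Ext R 𝒞 1).obj (op X)).obj Y) ↔
      ∀ φ : P.complex.X 1 ⟶ Y, P.complex.d 2 1 ≫ φ = 0 →
        ∃ ψ : P.complex.X 0 ⟶ Y, P.complex.d 1 0 ≫ ψ = φ := by
  rw [← ModuleCat.isZero_iff_subsingleton, Iso.isZero_iff (P.isoExt 1 Y),
    ← HomologicalComplex.exactAt_iff_isZero_homology,
    HomologicalComplex.exactAt_iff' _ 0 1 2 (by simp) (by simp),
    ShortComplex.moduleCat_exact_iff]
  rfl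

theorem CategoryTheory.Limits.CokernelCofork.IsColimit.exists_compatible_lifts
    {𝒞 : Type*} [Category 𝒞] [Preadditive 𝒞] {X₁ X₀ : 𝒞} {d : X₁ ⟶ X₀}
    {c : CokernelCofork d} (hc : IsColimit c) {Y : ℕ → 𝒞} (g : ∀ n, Y (n + 1) ⟶ Y n)
    (hg : ∀ n, Function.Surjective fun u : c.pt ⟶ Y (n + 1) => u ≫ g n)
    (ψ : ∀ n, X₀ ⟶ Y n) (hψ : ∀ n, d ≫ ψ (n + 1) ≫ g n = d ≫ ψ n) :
    ∃ ψ' : ∀ n, X₀ ⟶ Y n,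
      (∀ n, d ≫ ψ' n = d ≫ ψ n) ∧ ∀ n, ψ' (n + 1) ≫ g n = ψ' n := by
  have hdefect : ∀ n, d ≫ (ψ (n + 1) ≫ g n - ψ n) = 0 := fun n => by
    rw [Preadditive.comp_sub, hψ, sub_self]
  choose h hh using fun n => (desc' hc _ (hdefect n)).exists_of_subtype
  obtain ⟨k, hk⟩ := exists_seq_apply_succ_eq_sub_of_surjective _ hg h
  refine ⟨fun n => ψ n + c.π ≫ k n, fun n => ?_, fun n => ?_⟩
  · rw [Preadditive.comp_add, condition_assoc, zero_comp, add_zero]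
  · simp only [Preadditive.add_comp, Category.assoc, hk, Preadditive.comp_sub, hh]
    abel

/-- The inverse limit `lim_n Cₙ` of a tower `C₁ ← C₂ ← C₃ ← ⋯` of left `A`-modules,
realized as the submodule of compatible sequences in `Π n, Cₙ`. -/
def invLimit (A : Type) [Ring A] (C : ℕ → Type) [∀ n, AddCommGroup (C n)]
    [∀ n, Module A (C n)] (f : ∀ n, C (n + 1) →ₗ[A] C n) :
    Submodule A (∀ n, C n) where
  carrier := { x | ∀ n, f n (x (n + 1)) = x n }
  add_mem' := by
    intro a b ha hb n
    simp [ha n, hb n]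
  zero_mem' := by
    intro n
    simp
  smul_mem' := by
    intro c a ha n
    simp [ha n]

namespace invLimit

variable {A : Type} [Ring A] {C : ℕ → Type} [∀ n, AddCommGroup (C n)]
  [∀ n, Module A (C n)] (f : ∀ n, C (n + 1) →ₗ[A] C n) {M : Type*} [AddCommGroup M] [Module A M]

def π (n : ℕ) : invLimit A C f →ₗ[A] C n :=
  (LinearMap.proj n).comp (invLimit A C f).subtype

theorem comp_π_succ (n : ℕ) : f n ∘ₗ π f (n + 1) = π f n :=
  LinearMap.ext fun x => x.2 n

def lift (g : ∀ n, M →ₗ[A] C n) (hg : ∀ n, f n ∘ₗ g (n + 1) = g n) :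
    M →ₗ[A] invLimit A C f :=
  (LinearMap.pi g).codRestrict _ fun x n => LinearMap.congr_fun (hg n) x

theorem π_comp_lift (g : ∀ n, M →ₗ[A] C n) (hg : ∀ n, f n ∘ₗ g (n + 1) = g n) (n : ℕ) :
    π f n ∘ₗ lift f g hg = g n :=
  rfl

theorem hom_ext {u v : M →ₗ[A] invLimit A C f} (h : ∀ n, π f n ∘ₗ u = π f n ∘ₗ v) :
    u = v :=
  LinearMap.ext fun x => Subtype.ext <| funext fun n => LinearMap.congr_fun (h n) x

end invLimit

/-- the dual Eklof lemma. Let `A` be an associative ring, `F` a left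
`A`-module, and `C₁ ← C₂ ← ⋯` an inverse system of left `A`-modules such that all the maps
`Hom_A(F, Cₙ₊₁) → Hom_A(F, Cₙ)` are surjective and `Ext¹_A(F, Cₙ) = 0` for all `n`.
Then `Ext¹_A(F, lim_n Cₙ) = 0`. -/
theorem ext1_vanishes_of_inverse_limit
    (A : Type) [Ring A] (F : Type) [AddCommGroup F] [Module A F]
    (C : ℕ → Type) [∀ n, AddCommGroup (C n)] [∀ n, Module A (C n)]
    (f : ∀ n, C (n + 1) →ₗ[A] C n)
    (hsurj : ∀ n, Function.Surjective
      (fun g : F →ₗ[A] C (n + 1) => (f n).comp g))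
    (hext : ∀ n, Subsingleton (((Ext ℤ (ModuleCat A) 1).obj
      (op (ModuleCat.of A F))).obj (ModuleCat.of A (C n)))) :
    Subsingleton (((Ext ℤ (ModuleCat A) 1).obj
      (op (ModuleCat.of A F))).obj (ModuleCat.of A (invLimit A C f))) := by
  let P := projectiveResolution (ModuleCat.of A F)
  let p n : ModuleCat.of A (invLimit A C f) ⟶ ModuleCat.of A (C n) :=
    ModuleCat.ofHom (invLimit.π f n)
  have hp n : p (n + 1) ≫ ModuleCat.ofHom (f n) = p n :=
    ModuleCat.hom_ext (invLimit.comp_π_succ f n)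
  rw [P.subsingleton_ext_one_iff_s17]
  intro φ hφ
  choose ψ hψ using fun n => (P.subsingleton_ext_one_iff_s17 _).mp (hext n) (φ ≫ p n)
    (by rw [← Category.assoc, hφ, zero_comp])
  obtain ⟨ψ', hψ'd, hψ'f⟩ := CokernelCofork.IsColimit.exists_compatible_lifts
    P.isColimitCokernelCofork (fun n => ModuleCat.ofHom (f n))
    (fun n u => let ⟨v, hv⟩ := hsurj n u.hom; ⟨ModuleCat.ofHom v, ModuleCat.hom_ext hv⟩) ψ
    (fun n => by rw [← Category.assoc, hψ, Category.assoc, hp, hψ])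
  refine ⟨ModuleCat.ofHom (invLimit.lift f (fun n => (ψ' n).hom)
    fun n => congrArg ModuleCat.Hom.hom (hψ'f n)), ?_⟩
  exact ModuleCat.hom_ext <| invLimit.hom_ext f fun n => by
    rw [ModuleCat.hom_comp, ModuleCat.hom_ofHom, ← LinearMap.comp_assoc,
      invLimit.π_comp_lift]
    exact congrArg ModuleCat.Hom.hom ((hψ'd n).trans (hψ n))
end
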